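/- arXiv:2603.20831 — 13 statements merged into one kernel-verified Lean document; each statement's English description precedes it below -/
import Mathlib

section
/- Let V be a finite nonempty type and let G be a connected acyclic simple graph on V. Then for every labeling L : V → ZMod 3 there exists a vertex v of G that violates the 3-label acceptance condition with respect to G and L. -/
/-- A vertex `v` satisfies the 3-label acceptance condition with respect to
graph `G` and labeling `L : V → ZMod 3`. -/
def Accept3 {V : Type*} (G : SimpleGraph V) (L : V → ZMod 3) (v : V) : Prop :=
  (L v = 0 ∧ (∃ u w, u ≠ w ∧ G.Adj v u ∧ G.Adj v w ∧ L u = 0 ∧ L w = 0) ∧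
      (∀ u, G.Adj v u → L u ≠ 2)) ∨
  (L v ≠ 0 ∧ (∃ u, G.Adj v u ∧ L u = L v - 1 ∧
      (∀ w, G.Adj v w → w ≠ u → L w = L v + 1)))

open SimpleGraph

/-- In a path starting at `b`, at most one edge of the form `s(b, ·)` occurs. -/
private lemma edge_from_start_unique {V : Type*} {G : SimpleGraph V} {b c : V}
    (q : G.Walk b c) (hq : q.IsPath) :
    ∀ x y, s(b, x) ∈ q.edges → s(b, y) ∈ q.edges → x = y := by
  cases q with
  | nil => simp
  | @cons _ d _ h r =>
    rw [SimpleGraph.Walk.cons_isPath_iff] at hq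
    intro x y hx hy
    have key : ∀ z, s(b, z) ∈ (SimpleGraph.Walk.cons h r).edges → z = d := by
      intro z hz
      rw [SimpleGraph.Walk.edges_cons, List.mem_cons] at hz
      rcases hz with hz | hz
      · rcases Sym2.eq_iff.mp hz with ⟨_, h2⟩ | ⟨h1, _⟩
        · exact h2
        · exact absurd h1 h.ne
      · exact absurd (r.fst_mem_support_of_mem_edges hz) hq.2
    rw [key x hx, key y hy]

/-- In a finite acyclic graph there is no nonempty "two-branching" set of
vertices: a set where every member has two distinct neighbors in the set. -/
private lemma no_branching {V : Type*} [Fintype V] {G : SimpleGraph V}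
    (hacyc : G.IsAcyclic) (P : V → Prop)
    (hP : ∀ v, P v → ∃ u w, u ≠ w ∧ G.Adj v u ∧ G.Adj v w ∧ P u ∧ P w)
    {v0 : V} (h0 : P v0) : False := by
  classical
  have key : ∀ n : ℕ, ∃ (b : V) (p : G.Walk v0 b), p.IsPath ∧ P b ∧ p.length = n := by
    intro n
    induction n with
    | zero => exact ⟨v0, SimpleGraph.Walk.nil, by simp, h0, rfl⟩
    | succ n ih =>
      obtain ⟨b, p, hp, hb, hlen⟩ := ih
      obtain ⟨u, w, huw, hbu, hbw, hPu, hPw⟩ := hP b hb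
      have hex : ∃ x, G.Adj b x ∧ P x ∧ s(b, x) ∉ p.edges := by
        by_contra hcon
        push_neg at hcon
        have hu := hcon u hbu hPu
        have hw := hcon w hbw hPw
        have hrev : p.reverse.IsPath := hp.reverse
        have hu' : s(b, u) ∈ p.reverse.edges := by
          rw [SimpleGraph.Walk.edges_reverse]; simpa using hu
        have hw' : s(b, w) ∈ p.reverse.edges := by
          rw [SimpleGraph.Walk.edges_reverse]; simpa using hw
        exact huw (edge_from_start_unique p.reverse hrev u w hu' hw')
      obtain ⟨x, hbx, hPx, hxe⟩ := hex
      have hxs : x ∉ p.support := by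
        intro hxs
        have hdp : (p.dropUntil x hxs).IsPath := hp.dropUntil hxs
        have hcyc : (SimpleGraph.Walk.cons hbx (p.dropUntil x hxs)).IsCycle := by
          rw [SimpleGraph.Walk.cons_isCycle_iff]
          exact ⟨hdp, fun he => hxe (SimpleGraph.Walk.edges_dropUntil_subset p hxs he)⟩
        exact hacyc _ hcyc
      have hcp : (p.concat hbx).IsPath := by
        rw [← SimpleGraph.Walk.isPath_reverse_iff, SimpleGraph.Walk.reverse_concat]
        refine hp.reverse.cons ?_
        rw [SimpleGraph.Walk.support_reverse]
        simpa using hxs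
      exact ⟨x, p.concat hbx, hcp, hPx, by rw [SimpleGraph.Walk.length_concat, hlen]⟩
  obtain ⟨b, p, hp, _, hlen⟩ := key (Fintype.card V)
  have := hp.length_lt
  omega

theorem cycle_detection_three_labels_soundness
    (V : Type*) [Fintype V] [Nonempty V] (G : SimpleGraph V)
    (hconn : G.Connected) (hacyc : G.IsAcyclic) :
    ∀ L : V → ZMod 3, ∃ v : V, ¬ Accept3 G L v := by
  intro L
  by_contra hc
  push_neg at hc
  have hzero : ∀ v, L v = 0 → ∃ u w, u ≠ w ∧ G.Adj v u ∧ G.Adj v w ∧ L u = 0 ∧ L w = 0 := by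
    intro v hv
    have h := hc v
    unfold Accept3 at h
    rcases h with ⟨_, h2, _⟩ | ⟨h1, _⟩
    · exact h2
    · exact absurd hv h1
  have hstep : ∀ v, L v ≠ 0 → ∃ u, G.Adj v u ∧ L u = L v - 1 := by
    intro v hv
    have h := hc v
    unfold Accept3 at h
    rcases h with ⟨h1, _⟩ | ⟨_, u, hu, hLu, _⟩
    · exact absurd h1 hv
    · exact ⟨u, hu, hLu⟩
  obtain ⟨v⟩ := ‹Nonempty V›
  have trich : ∀ x : ZMod 3, x = 0 ∨ x = 1 ∨ x = 2 := by decide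
  have h0 : ∃ v0, L v0 = 0 := by
    rcases trich (L v) with h | h | h
    · exact ⟨v, h⟩
    · obtain ⟨u, _, hu⟩ := hstep v (by rw [h]; decide)
      exact ⟨u, by rw [hu, h]; decide⟩
    · obtain ⟨u, _, hu⟩ := hstep v (by rw [h]; decide)
      have hu1 : L u = 1 := by rw [hu, h]; decide
      obtain ⟨u', _, hu'⟩ := hstep u (by rw [hu1]; decide)
      exact ⟨u', by rw [hu', hu1]; decide⟩
  obtain ⟨v0, hv0⟩ := h0
  exact no_branching hacyc (fun v => L v = 0)
    (fun v hv => hzero v hv) hv0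
end

section
/- Let V be a finite nonempty type, G a simple graph on V, and L : V → ZMod 3 a labeling. If every vertex v of G has at least one neighbor u with L u = L v - 1 (arithmetic in ZMod 3), then G is not acyclic, i.e., G contains a cycle. -/
/-!
Choose a parent map `f`. On a finite type some vertex `x` is periodic under `f`, and since labels
drop by one along `f`, its minimal period `p` is a multiple of 3, so `p ≥ 3`. The iterates
`x, f x, …, f^[p-1] x` then form a path of length `p - 1 ≥ 2` whose endpoints are also joined by
an edge, so two distinct paths join them and `G` is not acyclic.
-/

open Function

theorem Function.periodicPts_nonempty {α : Type*} [Finite α] [Nonempty α] (f : α → α) :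
    (periodicPts f).Nonempty := by
  obtain ⟨x⟩ := ‹Nonempty α›
  obtain ⟨m, n, hmn, heq⟩ : ∃ m n, m < n ∧ f^[n] x = f^[m] x := by
    obtain ⟨a, b, hne, heq⟩ := Finite.exists_ne_map_eq_of_infinite (f^[·] x)
    rcases hne.lt_or_gt with h | h
    exacts [⟨a, b, h, heq.symm⟩, ⟨b, a, h, heq⟩]
  refine ⟨f^[m] x, mk_mem_periodicPts (Nat.sub_pos_of_lt hmn) ?_⟩
  rw [IsPeriodicPt, IsFixedPt, ← iterate_add_apply, Nat.sub_add_cancel hmn.le, heq]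

theorem dvd_minimalPeriod_of_apply_eq_sub_one {α : Type*} {n : ℕ} {f : α → α} {L : α → ZMod n}
    (hL : ∀ v, L (f v) = L v - 1) (x : α) : n ∣ minimalPeriod f x := by
  have hiter : ∀ k v, L (f^[k] v) = L v - k := by
    intro k
    induction k with
    | zero => simp
    | succ k ih => intro v; rw [iterate_succ_apply', hL, ih]; push_cast; ring
  have hperiod := hiter (minimalPeriod f x) x
  rw [iterate_minimalPeriod, eq_comm, sub_eq_self] at hperiod
  exact (ZMod.natCast_eq_zero_iff _ _).1 hperiod

namespace SimpleGraph

variable {V : Type*} {G : SimpleGraph V} {f : V → V}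

def iterateWalk (hf : ∀ v, G.Adj v (f v)) : (n : ℕ) → (v : V) → G.Walk v (f^[n] v)
  | 0, _ => Walk.nil
  | n + 1, v => Walk.cons (hf v) (iterateWalk hf n (f v))

theorem length_iterateWalk (hf : ∀ v, G.Adj v (f v)) (n : ℕ) (v : V) :
    (iterateWalk hf n v).length = n := by
  induction n generalizing v with
  | zero => rfl
  | succ n ih => simp [iterateWalk, ih]

theorem support_iterateWalk (hf : ∀ v, G.Adj v (f v)) (n : ℕ) (v : V) :
    (iterateWalk hf n v).support = (List.range (n + 1)).map (f^[·] v) := by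
  induction n generalizing v with
  | zero => rfl
  | succ n ih =>
    change v :: (iterateWalk hf n (f v)).support = _
    rw [ih, List.range_succ_eq_map (n := n + 1)]
    simp [Function.comp_def]

theorem isPath_iterateWalk (hf : ∀ v, G.Adj v (f v)) {n : ℕ} {v : V}
    (hn : n < minimalPeriod f v) : (iterateWalk hf n v).IsPath := by
  rw [Walk.isPath_def, support_iterateWalk]
  refine List.Nodup.map_on (fun a ha b hb hab => iterate_injOn_Iio_minimalPeriod ?_ ?_ hab)
    List.nodup_range
  all_goals simp only [List.mem_range] at ha hb; simp only [Set.mem_Iio]; omega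

theorem not_isAcyclic_of_three_le_minimalPeriod (hf : ∀ v, G.Adj v (f v)) {x : V}
    (hx : 3 ≤ minimalPeriod f x) : ¬ G.IsAcyclic := by
  intro hG
  set p := minimalPeriod f x
  have hclose : G.Adj x (f^[p - 1] x) := by
    have hlast := hf (f^[p - 1] x)
    rw [← iterate_succ_apply' f, Nat.succ_eq_add_one, Nat.sub_add_cancel (by omega),
      iterate_minimalPeriod] at hlast
    exact hlast.symm
  have hlen := congrArg (fun q : G.Path _ _ => q.1.length)
    ((hG.subsingleton_path _ _).elim (Path.singleton hclose)
      ⟨_, isPath_iterateWalk hf (n := p - 1) (by omega)⟩)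
  simp only [Path.singleton, Walk.length_cons, Walk.length_nil, length_iterateWalk] at hlen
  omega

end SimpleGraph

theorem parent_chaining_cycle
    (V : Type*) [Fintype V] [Nonempty V] (G : SimpleGraph V) (L : V → ZMod 3)
    (hparent : ∀ v : V, ∃ u : V, G.Adj v u ∧ L u = L v - 1) :
    ¬ G.IsAcyclic := by
  choose f hadj hlab using hparent
  obtain ⟨x, hx⟩ := periodicPts_nonempty f
  have hperiod : 3 ≤ minimalPeriod f x :=
    Nat.le_of_dvd (minimalPeriod_pos_of_mem_periodicPts hx)
      (dvd_minimalPeriod_of_apply_eq_sub_one hlab x)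
  exact SimpleGraph.not_isAcyclic_of_three_le_minimalPeriod hadj hperiod
end

section
/- There is no view-distance-1 verifier A over the label type Bool satisfying both: (completeness) for every n and every connected simple graph G on Fin n that contains a cycle, there exists a labeling L : Fin n → Bool such that A(G, L, v) = true for every vertex v; and (soundness) for every n ≥ 1 and every connected acyclic simple graph G on Fin n, for every labeling L : Fin n → Bool there exists a vertex v with A(G, L, v) = false. -/
/-!
Take a labelling of the tadpole graph (a triangle with a pendant path of length three) on which
every vertex accepts. A path all of whose labelled radius-1 views also occur in the tadpole is
then accepted at every vertex, contradicting soundness. Such a path exists: of the three labels on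
the pendant path before the leaf, two agree, so a path can walk in from the leaf along the
pendant and fold back at a vertex whose view is symmetric because of that coincidence.
-/

/-- `A` is a view-distance-`d` verifier over the label type `Λ`: its verdict at a
vertex is invariant under labeled pointed isomorphisms of radius-`d` balls. -/
def IsLocalVerifier (Λ : Type*) (d : ℕ)
    (A : ∀ n : ℕ, SimpleGraph (Fin n) → (Fin n → Λ) → Fin n → Bool) : Prop :=
  ∀ (n n' : ℕ) (G : SimpleGraph (Fin n)) (G' : SimpleGraph (Fin n'))
    (L : Fin n → Λ) (L' : Fin n' → Λ) (v : Fin n) (v' : Fin n')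
    (φ : G.induce {u | G.dist v u ≤ d} ≃g G'.induce {u | G'.dist v' u ≤ d})
    (hv : G.dist v v ≤ d),
    (↑(φ ⟨v, hv⟩) = v') →
    (∀ u : {u | G.dist v u ≤ d}, L' ↑(φ u) = L ↑u) →
    A n G L v = A n' G' L' v'

namespace SimpleGraph

variable {Λ V V' V'' W : Type*} {d : ℕ}

lemma Connected.dist_le_one_iff {G : SimpleGraph V} (hG : G.Connected) {u v : V} :
    G.dist u v ≤ 1 ↔ u = v ∨ G.Adj u v := by
  rw [Nat.le_one_iff_eq_zero_or_eq_one, hG.dist_eq_zero_iff, dist_eq_one_iff_adj]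

instance (n : ℕ) : DecidableRel (pathGraph n).Adj := fun _ _ => decidable_of_iff' _ pathGraph_adj

lemma pathGraph_connected_of_ne_zero {n : ℕ} (hn : n ≠ 0) : (pathGraph n).Connected :=
  @Connected.mk _ _ (pathGraph_preconnected n) ⟨⟨0, Nat.pos_of_ne_zero hn⟩⟩

theorem isAcyclic_pathGraph (n : ℕ) : (pathGraph n).IsAcyclic := by
  refine isAcyclic_iff_forall_adj_isBridge.mpr fun v w hvw => ?_
  wlog hvw' : v.val + 1 = w.val generalizing v w
  · rw [Sym2.eq_swap]
    exact this w v hvw.symm (by rw [pathGraph_adj] at hvw; omega)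
  refine isBridge_iff_forall_walk_mem_edges.mpr fun p => ?_
  obtain ⟨e, he, hfst, hsnd⟩ := p.exists_boundary_dart {u | u ≤ v} (le_refl v)
    (show ¬w ≤ v by rw [Fin.le_def]; omega)
  have he' := pathGraph_adj.mp e.adj
  simp only [Set.mem_ofPred_eq, Fin.le_def] at hfst hsnd
  have : e.edge = s(v, w) := by
    rw [Dart.edge, show e.fst = v by ext; omega, show e.snd = w by ext; omega]
  exact this ▸ List.mem_map_of_mem he

def pathGraph.shiftEmbedding {k r : ℕ} (c : ℕ) (h : c + k ≤ r) :
    pathGraph k ↪g pathGraph r where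
  toFun i := ⟨c + i, by omega⟩
  inj' i j hij := by simpa [Fin.ext_iff] using hij
  map_rel_iff' {a b} := by
    change (pathGraph r).Adj ⟨c + a, _⟩ ⟨c + b, _⟩ ↔ _
    simp only [pathGraph_adj]
    omega

@[simp]
lemma pathGraph.val_shiftEmbedding {k r : ℕ} (c : ℕ) (h : c + k ≤ r) (i : Fin k) :
    (pathGraph.shiftEmbedding c h i : ℕ) = c + i := rfl

def BallIsomorphic (d : ℕ) (G : SimpleGraph V) (L : V → Λ) (v : V)
    (G' : SimpleGraph V') (L' : V' → Λ) (v' : V') : Prop :=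
  ∃ φ : G.induce {u | G.dist v u ≤ d} ≃g G'.induce {u | G'.dist v' u ≤ d},
    (φ ⟨v, by simp⟩ : V') = v' ∧ ∀ u, L' (φ u) = L u

namespace BallIsomorphic

variable {G : SimpleGraph V} {G' : SimpleGraph V'} {G'' : SimpleGraph V''}
  {L : V → Λ} {L' : V' → Λ} {L'' : V'' → Λ} {v : V} {v' : V'} {v'' : V''}

lemma symm (h : BallIsomorphic d G L v G' L' v') : BallIsomorphic d G' L' v' G L v := by
  obtain ⟨φ, hv, hL⟩ := h
  refine ⟨φ.symm, ?_, fun u => by simpa using (hL (φ.symm u)).symm⟩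
  have : φ ⟨v, by simp⟩ = ⟨v', by simp⟩ := Subtype.ext hv
  rw [← this, RelIso.symm_apply_apply]

lemma trans (h : BallIsomorphic d G L v G' L' v') (h' : BallIsomorphic d G' L' v' G'' L'' v'') :
    BallIsomorphic d G L v G'' L'' v'' := by
  obtain ⟨φ, hv, hL⟩ := h
  obtain ⟨ψ, hv', hL'⟩ := h'
  have : φ ⟨v, by simp⟩ = ⟨v', by simp⟩ := Subtype.ext hv
  exact ⟨φ.trans ψ, by simp [this, hv'], fun u => by simp [hL', hL]⟩

end BallIsomorphic

lemma ballIsomorphic_of_embedding {M : SimpleGraph W} {G : SimpleGraph V}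
    {ℓ : W → Λ} {L : V → Λ} {m : W} (hM : ∀ w, M.dist m w ≤ d) (f : M ↪g G)
    (hf : Set.range f = {u | G.dist (f m) u ≤ d}) (hL : ∀ w, L (f w) = ℓ w) :
    BallIsomorphic d M ℓ m G L (f m) := by
  have hMball : {w | M.dist m w ≤ d} = Set.univ := Set.eq_univ_of_forall hM
  let φ := ((Iso.refl : M ≃g M).induce (s := {w | M.dist m w ≤ d}) (t := Set.univ)
      (by rw [hMball]; exact Set.bijOn_id _)).trans
    ((M.induceUnivIso.trans f.isoInduceRange).trans
      ((Iso.refl : G ≃g G).induce (s := Set.range f) (t := {u | G.dist (f m) u ≤ d})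
        (by rw [← hf]; exact Set.bijOn_id _)))
  exact ⟨φ, rfl, fun u => hL u⟩

lemma ballIsomorphic_one_of_embedding {M : SimpleGraph W} {G : SimpleGraph V}
    {ℓ : W → Λ} {L : V → Λ} {m : W} (hM : M.Connected) (hG : G.Connected)
    (hMball : ∀ w, m = w ∨ M.Adj m w) (f : M ↪g G)
    (hf : ∀ u, (∃ w, f w = u) ↔ f m = u ∨ G.Adj (f m) u) (hL : ∀ w, L (f w) = ℓ w) :
    BallIsomorphic 1 M ℓ m G L (f m) :=
  ballIsomorphic_of_embedding (fun w => hM.dist_le_one_iff.mpr (hMball w)) f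
    (Set.ext fun u => (hf u).trans hG.dist_le_one_iff.symm) hL

lemma pathGraph_ballIsomorphic_first {r : ℕ} (hr : 2 ≤ r) (y : ℕ → Λ) :
    BallIsomorphic 1 (pathGraph 2) ![y 0, y 1] 0 (pathGraph r) (fun u => y u)
      ⟨0, by omega⟩ := by
  refine ballIsomorphic_one_of_embedding (pathGraph_connected 1)
    (pathGraph_connected_of_ne_zero (by omega)) (by decide)
    (pathGraph.shiftEmbedding 0 hr) (fun u => ?_) (fun w => by fin_cases w <;> rfl)
  simp [pathGraph_adj, Fin.ext_iff, Fin.exists_fin_two]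

lemma pathGraph_ballIsomorphic_last {r : ℕ} (hr : 2 ≤ r) (y : ℕ → Λ) :
    BallIsomorphic 1 (pathGraph 2) ![y (r - 2), y (r - 1)] 1 (pathGraph r) (fun u => y u)
      ⟨r - 1, by omega⟩ := by
  have := ballIsomorphic_one_of_embedding (ℓ := ![y (r - 2), y (r - 1)]) (m := 1)
    (L := fun u : Fin r => y u) (pathGraph_connected 1)
    (pathGraph_connected_of_ne_zero (by omega)) (by decide)
    (pathGraph.shiftEmbedding (r - 2) (by omega)) (fun u => ?_) (fun w => ?_)
  · convert this using 1
    ext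
    simp only [pathGraph.val_shiftEmbedding, Fin.val_one]
    omega
  · simp [pathGraph_adj, Fin.ext_iff, Fin.exists_fin_two]
    omega
  · fin_cases w <;> simp; congr 1; omega

lemma pathGraph_ballIsomorphic_interior {r j : ℕ} (hj : 0 < j) (hjr : j + 1 < r) (y : ℕ → Λ) :
    BallIsomorphic 1 (pathGraph 3) ![y (j - 1), y j, y (j + 1)] 1 (pathGraph r) (fun u => y u)
      ⟨j, by omega⟩ := by
  have := ballIsomorphic_one_of_embedding (ℓ := ![y (j - 1), y j, y (j + 1)]) (m := 1)
    (L := fun u : Fin r => y u) (pathGraph_connected 2)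
    (pathGraph_connected_of_ne_zero (by omega)) (by decide)
    (pathGraph.shiftEmbedding (j - 1) (by omega)) (fun u => ?_) (fun w => ?_)
  · convert this using 1
    ext
    simp only [pathGraph.val_shiftEmbedding, Fin.val_one]
    omega
  · simp [pathGraph_adj, Fin.ext_iff, Fin.exists_fin_succ]
    omega
  · fin_cases w <;> simp <;> congr 1 <;> omega

end SimpleGraph

lemma IsLocalVerifier.eq_of_ballIsomorphic {Λ : Type*} {d : ℕ}
    {A : ∀ n : ℕ, SimpleGraph (Fin n) → (Fin n → Λ) → Fin n → Bool}
    (hA : IsLocalVerifier Λ d A) {n n' : ℕ} {G : SimpleGraph (Fin n)}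
    {G' : SimpleGraph (Fin n')} {L : Fin n → Λ} {L' : Fin n' → Λ} {v : Fin n} {v' : Fin n'}
    (h : G.BallIsomorphic d L v G' L' v') : A n G L v = A n' G' L' v' := by
  obtain ⟨φ, hv, hL⟩ := h
  exact hA n n' G G' L L' v v' φ _ hv hL

namespace CycleDetection

open SimpleGraph

def tadpole : SimpleGraph (Fin 6) := pathGraph 6 ⊔ edge 0 2

instance : DecidableRel tadpole.Adj := fun u v =>
  decidable_of_iff' ((pathGraph 6).Adj u v ∨ (u = 0 ∧ v = 2 ∨ u = 2 ∧ v = 0) ∧ u ≠ v)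
    (by rw [tadpole, sup_adj, edge_adj])

lemma tadpole_connected : tadpole.Connected := (pathGraph_connected 5).mono le_sup_left

lemma not_isAcyclic_tadpole : ¬ tadpole.IsAcyclic := fun h =>
  h.cliqueFree le_rfl {0, 1, 2} (is3Clique_triple_iff.mpr (by decide))

variable {Λ : Type*}

lemma tadpole_ballIsomorphic_leaf_zero (L : Fin 6 → Λ) :
    BallIsomorphic 1 (pathGraph 2) ![L 5, L 4] 0 tadpole L 5 :=
  ballIsomorphic_one_of_embedding (pathGraph_connected 1) tadpole_connected (by decide)
    ⟨⟨![5, 4], by decide⟩, @fun a b => by revert a b; decide⟩ (by decide)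
    (fun w => by fin_cases w <;> rfl)

lemma tadpole_ballIsomorphic_leaf_one (L : Fin 6 → Λ) :
    BallIsomorphic 1 (pathGraph 2) ![L 4, L 5] 1 tadpole L 5 :=
  ballIsomorphic_one_of_embedding (pathGraph_connected 1) tadpole_connected (by decide)
    ⟨⟨![4, 5], by decide⟩, @fun a b => by revert a b; decide⟩ (by decide)
    (fun w => by fin_cases w <;> rfl)

lemma exists_tadpole_ballIsomorphic_of_mem {L : Fin 6 → Λ} {p q s : Λ}
    (h : (p, q, s) ∈ [(L 2, L 3, L 4), (L 4, L 3, L 2), (L 3, L 4, L 5), (L 5, L 4, L 3)]) :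
    ∃ t, BallIsomorphic 1 (pathGraph 3) ![p, q, s] 1 tadpole L t := by
  simp only [List.mem_cons, Prod.mk.injEq, List.not_mem_nil, or_false] at h
  rcases h with ⟨rfl, rfl, rfl⟩ | ⟨rfl, rfl, rfl⟩ | ⟨rfl, rfl, rfl⟩ | ⟨rfl, rfl, rfl⟩
  · exact ⟨3, ballIsomorphic_one_of_embedding (pathGraph_connected 2) tadpole_connected
      (by decide) ⟨⟨![2, 3, 4], by decide⟩, @fun a b => by revert a b; decide⟩ (by decide)
      (fun w => by fin_cases w <;> rfl)⟩
  · exact ⟨3, ballIsomorphic_one_of_embedding (pathGraph_connected 2) tadpole_connected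
      (by decide) ⟨⟨![4, 3, 2], by decide⟩, @fun a b => by revert a b; decide⟩ (by decide)
      (fun w => by fin_cases w <;> rfl)⟩
  · exact ⟨4, ballIsomorphic_one_of_embedding (pathGraph_connected 2) tadpole_connected
      (by decide) ⟨⟨![3, 4, 5], by decide⟩, @fun a b => by revert a b; decide⟩ (by decide)
      (fun w => by fin_cases w <;> rfl)⟩
  · exact ⟨4, ballIsomorphic_one_of_embedding (pathGraph_connected 2) tadpole_connected
      (by decide) ⟨⟨![5, 4, 3], by decide⟩, @fun a b => by revert a b; decide⟩ (by decide)
      (fun w => by fin_cases w <;> rfl)⟩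

/-- `a b c d` are the labels along the pendant path `2 3 4 5` of the tadpole: every radius-1 view
of the path labelled by `w` is then a view of the leaf `5` or of one of the inner vertices `3, 4`. -/
def IsFoolingWord (a b c d : Bool) (w : List Bool) : Prop :=
  2 ≤ w.length ∧
  w.getD 0 false = d ∧ w.getD 1 false = c ∧
  w.getD (w.length - 2) false = c ∧ w.getD (w.length - 1) false = d ∧
  ∀ j < w.length - 1, 0 < j →
    (w.getD (j - 1) false, w.getD j false, w.getD (j + 1) false) ∈
      [(a, b, c), (c, b, a), (b, c, d), (d, c, b)]

instance (a b c d : Bool) (w : List Bool) : Decidable (IsFoolingWord a b c d w) := by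
  unfold IsFoolingWord; infer_instance

lemma exists_isFoolingWord (a b c d : Bool) : ∃ w, IsFoolingWord a b c d w := by
  rcases (by decide : ∀ a b c : Bool, b = c ∨ a = c ∨ a = b) a b c with rfl | rfl | rfl
  · exact ⟨[d, b, b, d], by revert a b d; decide⟩
  · exact ⟨[d, a, b, a, d], by revert a b d; decide⟩
  · exact ⟨[d, c, a, a, c, d], by revert a c d; decide⟩

lemma exists_tadpole_ballIsomorphic {L : Fin 6 → Bool} {w : List Bool}
    (hw : IsFoolingWord (L 2) (L 3) (L 4) (L 5) w) (j : Fin w.length) :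
    ∃ t, BallIsomorphic 1 (pathGraph w.length) (fun u => w.getD u false) j tadpole L t := by
  obtain ⟨hlen, h0, h1, hl2, hl1, hwin⟩ := hw
  obtain ⟨j, hj⟩ := j
  rcases Nat.eq_zero_or_pos j with rfl | hj0
  · refine ⟨5, (pathGraph_ballIsomorphic_first hlen fun i => w.getD i false).symm.trans ?_⟩
    rw [h0, h1]
    exact tadpole_ballIsomorphic_leaf_zero L
  rcases (show j = w.length - 1 ∨ j + 1 < w.length by omega) with rfl | hjr
  · refine ⟨5, (pathGraph_ballIsomorphic_last hlen fun i => w.getD i false).symm.trans ?_⟩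
    rw [hl2, hl1]
    exact tadpole_ballIsomorphic_leaf_one L
  · obtain ⟨t, ht⟩ := exists_tadpole_ballIsomorphic_of_mem (hwin j (by omega) hj0)
    exact ⟨t, (pathGraph_ballIsomorphic_interior hj0 hjr fun i => w.getD i false).symm.trans ht⟩

end CycleDetection

open SimpleGraph CycleDetection

theorem no_two_label_cycle_detection_view_distance_one :
    ¬ ∃ A : ∀ n : ℕ, SimpleGraph (Fin n) → (Fin n → Bool) → Fin n → Bool,
      IsLocalVerifier Bool 1 A ∧
      (∀ (n : ℕ) (G : SimpleGraph (Fin n)), G.Connected → ¬ G.IsAcyclic →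
        ∃ L : Fin n → Bool, ∀ v : Fin n, A n G L v = true) ∧
      (∀ (n : ℕ), 1 ≤ n → ∀ G : SimpleGraph (Fin n), G.Connected → G.IsAcyclic →
        ∀ L : Fin n → Bool, ∃ v : Fin n, A n G L v = false) := by
  rintro ⟨A, hA, hcomplete, hsound⟩
  obtain ⟨L, hL⟩ := hcomplete 6 tadpole tadpole_connected not_isAcyclic_tadpole
  obtain ⟨w, hw⟩ := exists_isFoolingWord (L 2) (L 3) (L 4) (L 5)
  have hlen : w.length ≠ 0 := by have := hw.1; omega
  obtain ⟨j, hj⟩ := hsound w.length (Nat.one_le_iff_ne_zero.mpr hlen) (pathGraph w.length)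
    (pathGraph_connected_of_ne_zero hlen) (isAcyclic_pathGraph _) (fun u => w.getD u false)
  obtain ⟨t, ht⟩ := exists_tadpole_ballIsomorphic hw j
  rw [hA.eq_of_ballIsomorphic ht, hL t] at hj
  exact Bool.noConfusion hj
end

section
/- Let Λ be a type and let n, d, i, j be natural numbers with i < j and j + 2d < n, and let f : Fin n → Λ satisfy f(i + t) = f(j + t) for all t with 0 ≤ t ≤ 2d. Set p = j - i, and let m be a positive multiple of p with m ≥ 2d + 1. Define g : ZMod m → Λ by g(s) = f(i + (s.val mod p)) (this index is at most j - 1 < n). Then for every s : ZMod m there exists a natural number q with i ≤ q and q + 2d < n such that g(s + t) = f(q + t) for all t with 0 ≤ t ≤ 2d. -/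
/-- Cyclic copying construction: repeating the block `f(i), …, f(j-1)` of a path
labeling around a cycle of length `m` produces a cyclic labeling each of whose
length-`(2d+1)` windows coincides with some internal window of the path labeling. -/
theorem cycle_construction {Λ : Type*} (n d i j : ℕ) (hij : i < j) (hjn : j + 2 * d < n)
    (f : Fin n → Λ)
    (hf : ∀ t : ℕ, t ≤ 2 * d → ∀ (h1 : i + t < n) (h2 : j + t < n),
      f ⟨i + t, h1⟩ = f ⟨j + t, h2⟩)
    (m : ℕ) (hmpos : 0 < m) (hmdvd : (j - i) ∣ m) (hm : 2 * d + 1 ≤ m)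
    (g : ZMod m → Λ)
    (hg : ∀ (s : ZMod m) (h : i + s.val % (j - i) < n),
      g s = f ⟨i + s.val % (j - i), h⟩) :
    ∀ s : ZMod m, ∃ q : ℕ, i ≤ q ∧ q + 2 * d < n ∧
      ∀ t : ℕ, t ≤ 2 * d → ∀ (h : q + t < n),
        g (s + (t : ZMod m)) = f ⟨q + t, h⟩ := by
  haveI : NeZero m := ⟨hmpos.ne'⟩
  set p := j - i with hp
  have hppos : 0 < p := by omega
  have hip : i + p = j := by omega
  have aux : ∀ k u, u < p → p * k + u ≤ p - 1 + 2 * d →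
      ∀ (h1 : i + u < n) (h2 : i + (p * k + u) < n),
        f ⟨i + u, h1⟩ = f ⟨i + (p * k + u), h2⟩ := by
    intro k
    induction k with
    | zero => intro u hu hle h1 h2; congr 1; simp only [Fin.mk.injEq]; omega
    | succ k ih =>
      intro u hu hle h1 h2
      have hm1 : p * (k + 1) = p * k + p := by ring
      have ht : p * k + u ≤ 2 * d := by omega
      have h3 : i + (p * k + u) < n := by omega
      have h4 : j + (p * k + u) < n := by omega
      rw [ih u hu (by omega) h1 h3, hf (p * k + u) ht h3 h4]
      congr 1
      simp only [Fin.mk.injEq]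
      omega
  intro s
  set r := s.val % p with hrdef
  have hr : r < p := Nat.mod_lt _ hppos
  refine ⟨i + r, Nat.le_add_right _ _, by omega, ?_⟩
  intro t ht h
  have hval : (s + (t : ZMod m)).val % p = (r + t) % p := by
    rw [ZMod.val_add, ZMod.val_natCast, Nat.mod_mod_of_dvd _ hmdvd,
        Nat.add_mod s.val (t % m), Nat.mod_mod_of_dvd t hmdvd, ← hrdef,
        Nat.add_mod r t, Nat.mod_mod_of_dvd s.val (dvd_refl p), ← hrdef]
  have hu : (r + t) % p < p := Nat.mod_lt _ hppos
  have hdm : p * ((r + t) / p) + (r + t) % p = r + t := Nat.div_add_mod _ _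
  have hidx : i + (s + (t : ZMod m)).val % p < n := by rw [hval]; omega
  rw [hg _ hidx]
  have e1 : f ⟨i + (s + (t : ZMod m)).val % p, hidx⟩
      = f ⟨i + (r + t) % p, by omega⟩ := by congr 1; simp only [Fin.mk.injEq]; omega
  rw [e1, aux ((r + t) / p) ((r + t) % p) hu (by omega) _ (by omega)]
  congr 1
  simp only [Fin.mk.injEq]
  omega
end

section
/- Let d ≥ 1 and λ, n be natural numbers, and suppose A is a view-distance-d verifier over the label type Fin λ satisfying both: (completeness) for every connected acyclic simple graph G on Fin n there exists a labeling L : Fin n → Fin λ with A(G, L, v) = true for every vertex v; and (soundness) for every n' ≥ 1 and every connected simple graph G' on Fin n' that contains a cycle, for every labeling L' : Fin n' → Fin λ there exists a vertex v with A(G', L', v) = false. Then n ≤ λ^(2d+1) + 2d. -/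
/-!
Label the path on `n` vertices by an accepted labeling. If `n > λ^(2d+1) + 2d`, two of its
`n - 2d` windows of length `2d+1` carry the same labels, so the labels are periodic with some
period `p` on a stretch of length `2d+1+p`. Wrap that period around a cycle whose length is a
multiple of `p` and exceeds `2d+1`: every radius-`d` ball of the cycle is a path of `2d+1`
vertices labeled like some radius-`d` ball of the original path, so the verifier accepts the
cycle everywhere, contradicting soundness.
-/

theorem Fin.val_sub_eq_one_iff {n : ℕ} {u v : Fin (n + 2)} :
    (u - v).val = 1 ↔ u.val = v.val + 1 ∨ (u.val = 0 ∧ v.val = n + 1) := by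
  rcases le_or_gt v u with h | h
  · rw [Fin.coe_sub_iff_le.mpr h, Fin.le_def] at *
    omega
  · rw [Fin.coe_sub_iff_lt.mpr h, Fin.lt_def] at *
    omega

theorem exists_windows_eq_of_card_pow_lt {α : Type*} [Fintype α] (f : ℕ → α) {k N : ℕ}
    (h : Fintype.card α ^ k < N) :
    ∃ i j, i < j ∧ j < N ∧ ∀ s < k, f (i + s) = f (j + s) := by
  obtain ⟨x, y, hne, hxy⟩ := Fintype.exists_ne_map_eq_of_card_lt
    (fun (i : Fin N) (s : Fin k) ↦ f (i + s)) (by simpa using h)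
  rcases lt_or_gt_of_ne (Fin.val_ne_of_ne hne) with hlt | hlt
  · exact ⟨x, y, hlt, y.isLt, fun s hs ↦ congrFun hxy ⟨s, hs⟩⟩
  · exact ⟨y, x, hlt, x.isLt, fun s hs ↦ (congrFun hxy ⟨s, hs⟩).symm⟩

theorem apply_eq_apply_mod_of_apply_add_eq {α : Type*} {f : ℕ → α} {p N : ℕ}
    (h : ∀ x < N, f (x + p) = f x) : ∀ x < N + p, f x = f (x % p) := by
  rcases Nat.eq_zero_or_pos p with rfl | hp
  · simp
  intro x hx
  induction x using Nat.strong_induction_on with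
  | _ x ih =>
    rcases lt_or_ge x p with hxp | hpx
    · rw [Nat.mod_eq_of_lt hxp]
    · obtain ⟨y, rfl⟩ := Nat.exists_eq_add_of_le' hpx
      rw [h y (by omega), Nat.add_mod_right]
      exact ih y (by omega) (by omega)

theorem exists_periodic_segment_of_card_pow_lt {α : Type*} [Fintype α] (f : ℕ → α) {k N : ℕ}
    (h : Fintype.card α ^ k < N) :
    ∃ i p, 0 < p ∧ i + p < N ∧ ∀ x < k + p, f (i + x) = f (i + x % p) := by
  obtain ⟨i, j, hij, hjN, hwin⟩ := exists_windows_eq_of_card_pow_lt f h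
  refine ⟨i, j - i, by omega, by omega,
    apply_eq_apply_mod_of_apply_add_eq (f := (f <| i + ·)) fun x hx ↦ ?_⟩
  rw [← add_assoc, add_right_comm, Nat.add_sub_cancel' hij.le]
  exact (hwin x hx).symm

namespace SimpleGraph

variable {V W : Type*} {G : SimpleGraph V} {H : SimpleGraph W}

theorem isAcyclic_hasse {α : Type*} [LinearOrder α] : (hasse α).IsAcyclic := by
  refine isAcyclic_iff_forall_adj_isBridge.mpr fun a b hab ↦ ?_
  wlog hcov : a ⋖ b generalizing a b
  · rw [Sym2.eq_swap]
    exact this _ _ hab.symm ((hasse_adj.mp hab).resolve_left hcov)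
  -- A walk from `a` to `b` avoiding the edge would have to leave `{z | z ≤ a}` along another
  -- covering edge, and there is none.
  rintro ⟨p⟩
  obtain ⟨⟨⟨x, y⟩, hxy⟩, -, hx, hy⟩ :=
    p.exists_boundary_dart {z | z ≤ a} le_rfl hcov.lt.not_ge
  simp only [Set.mem_ofPred_eq, not_le] at hx hy
  rw [deleteEdges_adj, hasse_adj] at hxy
  obtain ⟨hcov' | hcov', hne⟩ := hxy
  · obtain rfl : x = a := le_antisymm hx (hcov'.le_of_lt hy)
    exact hne (by rw [hcov'.unique_right hcov]; rfl)
  · exact absurd hcov'.lt (hx.trans hy.le).not_gt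

theorem Hom.dist_le (f : G →g H) {u v : V} (h : G.Reachable u v) :
    H.dist (f u) (f v) ≤ G.dist u v := by
  obtain ⟨p, hp⟩ := h.exists_walk_length_eq_dist
  simpa [hp] using SimpleGraph.dist_le (p.map f)

theorem pathGraph_dist_le {n : ℕ} {a b : Fin n} (hab : a ≤ b) :
    (pathGraph n).dist a b ≤ b - a := by
  obtain ⟨k, hk⟩ : ∃ k, (b : ℕ) - a = k := ⟨_, rfl⟩
  rw [Fin.le_def] at hab
  induction k generalizing b with
  | zero => simp [Fin.ext (by omega : (b : ℕ) = a)]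
  | succ k ih =>
    obtain ⟨b', hb'⟩ : ∃ b' : Fin n, (b' : ℕ) + 1 = b := ⟨⟨b - 1, by omega⟩, by simp; omega⟩
    have hadj : (pathGraph n).Adj b' b := pathGraph_adj.mpr (.inl hb')
    calc (pathGraph n).dist a b ≤ (pathGraph n).dist a b' + (pathGraph n).dist b' b :=
          hadj.reachable.dist_triangle_right a
      _ ≤ k + 1 := by
          rw [dist_eq_one_iff_adj.mpr hadj]
          have := ih (b := b') (by omega) (by omega)
          omega
      _ = b - a := hk.symm

def Embedding.HasClosedInterior {k : ℕ} (e : pathGraph k ↪g G) : Prop :=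
  ∀ s : Fin k, s.val ≠ 0 → s.val + 1 ≠ k → G.neighborSet (e s) ⊆ Set.range e

theorem Embedding.HasClosedInterior.ball_eq_range {d : ℕ} (hG : G.Preconnected)
    {e : pathGraph (2 * d + 1) ↪g G} (he : e.HasClosedInterior) :
    {u | G.dist (e ⟨d, by omega⟩) u ≤ d} = Set.range e := by
  ext u
  constructor
  · intro hu
    obtain ⟨p, hp⟩ := (hG (e ⟨d, by omega⟩) u).exists_walk_length_eq_dist
    -- A walk can only leave the path through an endpoint `e 0` or `e (2d)`, which is too far.
    suffices key : ∀ {x y : V} (q : G.Walk x y) (s : Fin (2 * d + 1)), x = e s →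
        (s : ℕ) - d + (d - s) + q.length ≤ d → y ∈ Set.range e from
      key p _ rfl (by simp only [Set.mem_ofPred_eq] at hu ⊢; omega)
    intro x y q
    induction q with
    | nil => rintro s rfl -; exact ⟨s, rfl⟩
    | cons hadj q ih =>
      rintro s rfl hlen
      rw [Walk.length_cons] at hlen
      obtain ⟨t, rfl⟩ := he s (by omega) (by omega) hadj
      rw [e.map_adj_iff, pathGraph_adj] at hadj
      exact ih t rfl (by omega)
  · rintro ⟨s, rfl⟩
    have hpath : (pathGraph (2 * d + 1)).dist ⟨d, by omega⟩ s ≤ d := by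
      rcases le_total (⟨d, by omega⟩ : Fin (2 * d + 1)) s with h | h
      · have := pathGraph_dist_le h
        simp only [Fin.le_def] at h this
        omega
      · have := pathGraph_dist_le h
        rw [dist_comm] at this
        simp only [Fin.le_def] at h this
        omega
    exact (e.toHom.dist_le ((pathGraph_connected _).preconnected _ _)).trans hpath

theorem Embedding.HasClosedInterior.exists_iso_ball {d : ℕ} (hG : G.Preconnected)
    (hH : H.Preconnected) {e : pathGraph (2 * d + 1) ↪g G} {f : pathGraph (2 * d + 1) ↪g H}
    (he : e.HasClosedInterior) (hf : f.HasClosedInterior) :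
    ∃ φ : G.induce {u | G.dist (e ⟨d, by omega⟩) u ≤ d} ≃g
        H.induce {u | H.dist (f ⟨d, by omega⟩) u ≤ d},
      ∀ s hs, (φ ⟨e s, hs⟩ : W) = f s :=
  ⟨(Iso.refl.induce (by rw [he.ball_eq_range hG]; exact Set.bijOn_id _)).trans
    (e.isoInduceRange.symm.trans (f.isoInduceRange.trans
      (Iso.refl.induce (by rw [hf.ball_eq_range hH]; exact Set.bijOn_id _)))),
    fun s _ ↦ congrArg f (Equiv.ofInjective_symm_apply e.injective s)⟩

def pathGraphSegment {k n : ℕ} (a : ℕ) (h : a + k ≤ n) : pathGraph k ↪g pathGraph n where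
  toFun s := ⟨a + s, by omega⟩
  inj' s t hst := Fin.ext (by simpa using congrArg Fin.val hst)
  map_rel_iff' {s t} := by
    show (pathGraph n).Adj ⟨a + s, _⟩ ⟨a + t, _⟩ ↔ _
    simp only [pathGraph_adj]
    omega

theorem pathGraphSegment_apply {k n a : ℕ} (h : a + k ≤ n) (s : Fin k) :
    pathGraphSegment a h s = ⟨a + s, by omega⟩ := rfl

theorem pathGraphSegment_hasClosedInterior {k n a : ℕ} (h : a + k ≤ n) :
    (pathGraphSegment a h).HasClosedInterior := by
  intro s hs0 hsk x hx
  simp only [mem_neighborSet, pathGraphSegment_apply, pathGraph_adj] at hx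
  exact ⟨⟨x - a, by omega⟩, Fin.ext (by simp only [pathGraphSegment_apply]; omega)⟩

def cycleGraphArc {k m : ℕ} (hk : k < m + 2) (a : Fin (m + 2)) :
    pathGraph k ↪g cycleGraph (m + 2) where
  toFun s := a + Fin.castLE hk.le s
  inj' s t hst := Fin.castLE_injective hk.le (add_left_cancel hst)
  map_rel_iff' {s t} := by
    show (cycleGraph (m + 2)).Adj (a + Fin.castLE hk.le s) (a + Fin.castLE hk.le t) ↔ _
    simp only [cycleGraph_adj', add_sub_add_left_eq_sub, Fin.val_sub_eq_one_iff,
      Fin.val_castLE, pathGraph_adj]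
    omega

theorem cycleGraphArc_apply {k m : ℕ} (hk : k < m + 2) (a : Fin (m + 2)) (s : Fin k) :
    cycleGraphArc hk a s = a + Fin.castLE hk.le s := rfl

theorem cycleGraphArc_apply_val_mod {k m p : ℕ} (hk : k < m + 2) (hp : p ∣ m + 2)
    (a : Fin (m + 2)) (s : Fin k) : (cycleGraphArc hk a s).val % p = (a.val % p + s) % p := by
  rw [cycleGraphArc_apply, Fin.val_add, Nat.mod_mod_of_dvd _ hp, Fin.val_castLE, Nat.mod_add_mod]

theorem cycleGraphArc_hasClosedInterior {k m : ℕ} (hk : k < m + 2) (a : Fin (m + 2)) :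
    (cycleGraphArc hk a).HasClosedInterior := by
  intro s hs0 hsk x hx
  obtain ⟨t, rfl⟩ : ∃ t, x = a + t := ⟨x - a, by abel⟩
  rw [mem_neighborSet, cycleGraphArc_apply, cycleGraph_adj', add_sub_add_left_eq_sub,
    add_sub_add_left_eq_sub, Fin.val_sub_eq_one_iff, Fin.val_sub_eq_one_iff,
    Fin.val_castLE] at hx
  exact ⟨⟨t, by omega⟩, rfl⟩

end SimpleGraph

open SimpleGraph

theorem IsLocalVerifier.apply_eq_of_hasClosedInterior {Λ : Type*} {d : ℕ}
    {A : ∀ n : ℕ, SimpleGraph (Fin n) → (Fin n → Λ) → Fin n → Bool}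
    (hA : IsLocalVerifier Λ d A) {n n' : ℕ} {G : SimpleGraph (Fin n)}
    {G' : SimpleGraph (Fin n')} (hG : G.Preconnected) (hG' : G'.Preconnected)
    {e : pathGraph (2 * d + 1) ↪g G} {e' : pathGraph (2 * d + 1) ↪g G'}
    (he : e.HasClosedInterior) (he' : e'.HasClosedInterior)
    {L : Fin n → Λ} {L' : Fin n' → Λ} (hL : ∀ s, L' (e' s) = L (e s)) :
    A n G L (e ⟨d, by omega⟩) = A n' G' L' (e' ⟨d, by omega⟩) := by
  obtain ⟨φ, hφ⟩ := he.exists_iso_ball hG hG' he'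
  refine hA n n' G G' L L' _ _ φ (by simp) (hφ _ _) ?_
  rintro ⟨u, hu⟩
  obtain ⟨s, rfl⟩ : u ∈ Set.range e := he.ball_eq_range hG ▸ hu
  rw [hφ]
  exact hL s

theorem cycle_absence_label_lower_bound_general (d : ℕ) (lam n : ℕ)
    (A : ∀ n : ℕ, SimpleGraph (Fin n) → (Fin n → Fin lam) → Fin n → Bool)
    (hA : IsLocalVerifier (Fin lam) d A)
    (hcomplete : ∀ G : SimpleGraph (Fin n), G.Connected → G.IsAcyclic →
      ∃ L : Fin n → Fin lam, ∀ v : Fin n, A n G L v = true)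
    (hsound : ∀ (n' : ℕ), 1 ≤ n' → ∀ G' : SimpleGraph (Fin n'), G'.Connected →
      ¬ G'.IsAcyclic → ∀ L' : Fin n' → Fin lam, ∃ v : Fin n', A n' G' L' v = false) :
    n ≤ lam ^ (2 * d + 1) + 2 * d := by
  by_contra! hn
  obtain ⟨n, rfl⟩ : ∃ n', n = n' + 1 := ⟨n - 1, by omega⟩
  obtain ⟨L, hL⟩ := hcomplete _ (pathGraph_connected n) isAcyclic_hasse
  obtain ⟨i, p, hp, hip, hper⟩ := exists_periodic_segment_of_card_pow_lt
    (fun x ↦ L (Fin.ofNat (n + 1) x)) (k := 2 * d + 1) (N := n + 1 - 2 * d)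
    (by simp only [Fintype.card_fin]; omega)
  -- The cycle length must be a multiple of `p`, exceed `2d + 1` and be at least `3`.
  obtain ⟨m, hm⟩ : ∃ m, m + 3 = (2 * d + 3) * p :=
    ⟨(2 * d + 3) * p - 3, Nat.sub_add_cancel (by nlinarith)⟩
  have hdvd : p ∣ m + 3 := hm ▸ dvd_mul_left p _
  let L' : Fin (m + 3) → Fin lam := fun x ↦ L (Fin.ofNat (n + 1) (i + x.val % p))
  obtain ⟨w, hw⟩ := hsound (m + 3) (by omega) (cycleGraph (m + 3)) cycleGraph_connected
    (fun h ↦ h _ cycleGraph.isCycle_cycle) L'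
  have hk : 2 * d + 1 < m + 1 + 2 := by nlinarith
  set a := w - Fin.castLE hk.le ⟨d, by omega⟩
  have hr := Nat.mod_lt a.val hp
  have hseg : i + a.val % p + (2 * d + 1) ≤ n + 1 := by omega
  have hlabels : ∀ s, L (pathGraphSegment _ hseg s) = L' (cycleGraphArc hk a s) := fun s ↦ by
    dsimp only [L']
    rw [pathGraphSegment_apply, cycleGraphArc_apply_val_mod hk hdvd, ← hper _ (by omega)]
    refine congrArg L (Fin.ext ?_)
    rw [Fin.val_ofNat, Nat.mod_eq_of_lt (by omega : i + (a.val % p + s) < n + 1)]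
    exact add_assoc _ _ _
  have key := hA.apply_eq_of_hasClosedInterior cycleGraph_connected.preconnected
    (pathGraph_connected n).preconnected (cycleGraphArc_hasClosedInterior hk a)
    (pathGraphSegment_hasClosedInterior hseg) hlabels
  rw [show cycleGraphArc hk a ⟨d, _⟩ = w from sub_add_cancel _ _, hw, hL] at key
  exact Bool.false_ne_true key

/-- Lower bound for cycle absence: a view-distance-`d` verifier for acyclicity
using `lam` labels can only handle graphs with at most `lam^(2d+1) + 2d` vertices. -/
theorem cycle_absence_label_lower_bound (d : ℕ) (hd : 1 ≤ d) (lam n : ℕ)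
    (A : ∀ n : ℕ, SimpleGraph (Fin n) → (Fin n → Fin lam) → Fin n → Bool)
    (hA : IsLocalVerifier (Fin lam) d A)
    (hcomplete : ∀ G : SimpleGraph (Fin n), G.Connected → G.IsAcyclic →
      ∃ L : Fin n → Fin lam, ∀ v : Fin n, A n G L v = true)
    (hsound : ∀ (n' : ℕ), 1 ≤ n' → ∀ G' : SimpleGraph (Fin n'), G'.Connected →
      ¬ G'.IsAcyclic → ∀ L' : Fin n' → Fin lam, ∃ v : Fin n', A n' G' L' v = false) :
    n ≤ lam ^ (2 * d + 1) + 2 * d :=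
  cycle_absence_label_lower_bound_general d lam n A hA hcomplete hsound
end

section
/- Let V be a finite type, G a connected simple graph on V, Λ a type with decidable equality, and i a natural number. Let A : V → (V → Λ) → Prop be 1-local with respect to G. Suppose L_O : V → Λ satisfies A v L_O for every vertex v, and L_adv : V → Λ is such that for every vertex v the number of vertices u with dist_G(v, u) ≤ 2i + 1 and L_adv(u) ≠ L_O(u) is at most i. Then for every vertex v there exists a labeling l : V → Λ such that the number of vertices u with dist_G(v, u) ≤ 2i + 1 and l(u) ≠ L_adv(u) is at most i, and A w l holds for every vertex w with dist_G(v, w) ≤ 2i. -/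
/-- `A` is 1-local with respect to `G`: the verdict of `A` at `v` depends only on
the labels of `v` and its neighbors. -/
def OneLocal {V Λ : Type*} (G : SimpleGraph V) (A : V → (V → Λ) → Prop) : Prop :=
  ∀ (v : V) (L L' : V → Λ), L v = L' v → (∀ u, G.Adj v u → L u = L' u) →
    (A v L ↔ A v L')

/-- Completeness of the refix framework (base view distance 1): if the adversarial
labeling has at most `i` errors within distance `2i+1` of every node, then every
node finds a corrected labeling, differing from `L_adv` in at most `i` nodes of its
`(2i+1)`-ball, accepted by all nodes within distance `2i`. -/
theorem refix_completeness
    (V : Type*) [Fintype V] (G : SimpleGraph V) (hconn : G.Connected)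
    (Λ : Type*) [DecidableEq Λ] (i : ℕ)
    (A : V → (V → Λ) → Prop) (hA : OneLocal G A)
    (L_O : V → Λ) (hO : ∀ v : V, A v L_O)
    (L_adv : V → Λ)
    (hadv : ∀ v : V, {u : V | G.dist v u ≤ 2 * i + 1 ∧ L_adv u ≠ L_O u}.ncard ≤ i) :
    ∀ v : V, ∃ l : V → Λ,
      {u : V | G.dist v u ≤ 2 * i + 1 ∧ l u ≠ L_adv u}.ncard ≤ i ∧
      ∀ w : V, G.dist v w ≤ 2 * i → A w l := by
  intro v
  classical
  refine ⟨fun u => if G.dist v u ≤ 2 * i + 1 then L_O u else L_adv u, ?_, ?_⟩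
  · refine le_trans (Set.ncard_le_ncard ?_ (Set.toFinite _)) (hadv v)
    rintro u ⟨hd, hne⟩
    simp only [if_pos hd] at hne
    exact ⟨hd, fun h => hne h.symm⟩
  · intro w hw
    have key : ∀ u, G.dist w u ≤ 1 →
        (if G.dist v u ≤ 2 * i + 1 then L_O u else L_adv u) = L_O u := by
      intro u hu
      have : G.dist v u ≤ 2 * i + 1 :=
        le_trans (hconn.dist_triangle (v := w)) (by omega)
      simp [this]
    refine (hA w _ L_O (key w (by simp [SimpleGraph.dist_self])) fun u hadj => key u ?_).mpr (hO w)
    exact le_of_eq (SimpleGraph.dist_eq_one_iff_adj.mpr hadj)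
end

section
/- Let V be a type, G a simple graph on V, Λ a type, and A : V → (V → Λ) → Prop a predicate that is 1-local with respect to G. Suppose l assigns to each vertex v a labeling l_v : V → Λ such that: (1) A v l_v holds for every vertex v, and (2) for all adjacent vertices u and v, l_u(u) = l_v(u) and l_u(v) = l_v(v). Then the global labeling L defined by L(w) = l_w(w) satisfies A v L for every vertex v. -/
/-- Soundness core of the refix framework (base view distance 1): if every node
accepts its imagined labeling and adjacent nodes' imagined labelings agree on each
other, then the assembled labeling `L w = l w w` is accepted everywhere. -/
theorem refix_soundness_assembly
    {V Λ : Type*} (G : SimpleGraph V)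
    (A : V → (V → Λ) → Prop) (hA : OneLocal G A)
    (l : V → V → Λ)
    (h1 : ∀ v : V, A v (l v))
    (h2 : ∀ u v : V, G.Adj u v → l u u = l v u ∧ l u v = l v v) :
    ∀ v : V, A v (fun w => l w w) := fun v =>
  (hA v (l v) (fun w => l w w) rfl fun u hvu => (h2 u v hvu.symm).1.symm).mp (h1 v)
end

section
/- Let k ≥ 1 be a natural number and let L, L' : Fin (k+1) → ℕ both be admissible sequences. If L(0) = L'(0) and L(k) = L'(k), then L = L'. -/
/-- Indices `j` and `j'` of a path are adjacent. -/
def AdjIdx {n : ℕ} (j j' : Fin n) : Prop := (j : ℕ) + 1 = (j' : ℕ) ∨ (j' : ℕ) + 1 = (j : ℕ)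

/-- A sequence of natural-number labels on a path is admissible: every index with a
nonzero label has all adjacent labels one smaller or one larger, and at most one
adjacent index carries the label one smaller. -/
def Admissible {n : ℕ} (L : Fin n → ℕ) : Prop :=
  ∀ j : Fin n, L j ≠ 0 →
    (∀ j' : Fin n, AdjIdx j j' → L j' = L j - 1 ∨ L j' = L j + 1) ∧
    (∀ j₁ j₂ : Fin n, AdjIdx j j₁ → AdjIdx j j₂ →
      L j₁ = L j - 1 → L j₂ = L j - 1 → j₁ = j₂)

/-- Each step of an admissible labeling is flat-at-zero, down by one, or up by one. -/
lemma admissible_step {k : ℕ} {L : Fin (k + 1) → ℕ} (hL : Admissible L) (i : ℕ)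
    (h : i + 1 ≤ k) :
    (L ⟨i, by omega⟩ = 0 ∧ L ⟨i + 1, by omega⟩ = 0) ∨
    (L ⟨i, by omega⟩ ≠ 0 ∧ L ⟨i + 1, by omega⟩ + 1 = L ⟨i, by omega⟩) ∨
    L ⟨i + 1, by omega⟩ = L ⟨i, by omega⟩ + 1 := by
  by_cases ha : L (⟨i, by omega⟩ : Fin (k + 1)) = 0
  · by_cases hb : L (⟨i + 1, by omega⟩ : Fin (k + 1)) = 0
    · exact Or.inl ⟨ha, hb⟩
    · have := (hL ⟨i + 1, by omega⟩ hb).1 ⟨i, by omega⟩ (Or.inr rfl)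
      refine Or.inr (Or.inr ?_)
      rcases this with h1 | h1 <;> omega
  · have := (hL ⟨i, by omega⟩ ha).1 ⟨i + 1, by omega⟩ (Or.inl rfl)
    rcases this with h1 | h1
    · exact Or.inr (Or.inl ⟨ha, by omega⟩)
    · exact Or.inr (Or.inr h1)

/-- Labels grow by at most one per step. -/
lemma admissible_bound {k : ℕ} {L : Fin (k + 1) → ℕ} (hL : Admissible L) (i : ℕ) :
    ∀ d : ℕ, ∀ h : i + d ≤ k, L ⟨i + d, by omega⟩ ≤ L ⟨i, by omega⟩ + d := by
  intro d
  induction d with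
  | zero => intro h; simp
  | succ d ih =>
    intro h
    have hd : i + d ≤ k := by omega
    have hih := ih hd
    have hs := admissible_step hL (i + d) (by omega)
    have he : (⟨i + d + 1, by omega⟩ : Fin (k + 1)) = ⟨i + (d + 1), by omega⟩ := by
      simp [Fin.ext_iff]; omega
    rw [he] at hs
    rcases hs with ⟨h1, h2⟩ | ⟨h1, h2⟩ | h1 <;> omega

set_option maxHeartbeats 1000000 in
/-- An up-step propagates to the right: all later steps are up-steps. -/
lemma admissible_up {k : ℕ} {L : Fin (k + 1) → ℕ} (hL : Admissible L) (i : ℕ)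
    (hi : i + 1 ≤ k) (hup : L ⟨i + 1, by omega⟩ = L ⟨i, by omega⟩ + 1) :
    ∀ d : ℕ, ∀ h : i + 1 + d ≤ k,
      L ⟨i + 1 + d, by omega⟩ = L ⟨i + 1, by omega⟩ + d ∧
      L ⟨i + d, by omega⟩ + 1 = L ⟨i + 1 + d, by omega⟩ := by
  intro d
  induction d with
  | zero => intro h; simpa using hup.symm
  | succ d ih =>
    intro h
    obtain ⟨ih1, ih2⟩ := ih (by omega)
    -- node j = i+1+d is nonzero, its left neighbor has label one smaller,
    -- hence its right neighbor must have label one larger.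
    have hjne : L (⟨i + 1 + d, by omega⟩ : Fin (k + 1)) ≠ 0 := by omega
    obtain ⟨hall, huniq⟩ := hL ⟨i + 1 + d, by omega⟩ hjne
    have hadjL : AdjIdx (⟨i + 1 + d, by omega⟩ : Fin (k + 1)) ⟨i + d, by omega⟩ :=
      Or.inr (by simp; omega)
    have hadjR : AdjIdx (⟨i + 1 + d, by omega⟩ : Fin (k + 1)) ⟨i + 1 + d + 1, by omega⟩ :=
      Or.inl rfl
    have hleft : L (⟨i + d, by omega⟩ : Fin (k + 1)) =
        L (⟨i + 1 + d, by omega⟩ : Fin (k + 1)) - 1 := by omega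
    have hR := hall ⟨i + 1 + d + 1, by omega⟩ hadjR
    have hRup : L (⟨i + 1 + d + 1, by omega⟩ : Fin (k + 1)) =
        L (⟨i + 1 + d, by omega⟩ : Fin (k + 1)) + 1 := by
      rcases hR with hR | hR
      · exfalso
        have h2 := huniq ⟨i + d, by omega⟩ ⟨i + 1 + d + 1, by omega⟩ hadjL hadjR hleft hR
        have h3 := congrArg Fin.val h2
        simp only [] at h3
        omega
      · exact hR
    have ea : L (⟨i + (d + 1), by omega⟩ : Fin (k + 1)) = L ⟨i + 1 + d, by omega⟩ := by
      congr 1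
      simp only [Fin.mk.injEq]
      omega
    have eb : L (⟨i + 1 + (d + 1), by omega⟩ : Fin (k + 1)) = L ⟨i + 1 + d + 1, by omega⟩ := rfl
    exact ⟨by omega, by omega⟩

/-- If one labeling takes an up-step at `i` while the other is strictly below it
at `i+1`, the endpoints cannot agree. -/
lemma admissible_contra {k : ℕ} {L L' : Fin (k + 1) → ℕ}
    (hL : Admissible L) (hL' : Admissible L')
    (hlast : L (Fin.last k) = L' (Fin.last k)) (i : ℕ) (hi : i + 1 ≤ k)
    (hup : L' ⟨i + 1, by omega⟩ = L' ⟨i, by omega⟩ + 1)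
    (hlt : L ⟨i + 1, by omega⟩ < L' ⟨i + 1, by omega⟩) : False := by
  have hlastL : Fin.last k = (⟨i + 1 + (k - (i + 1)), by omega⟩ : Fin (k + 1)) := by
    simp [Fin.ext_iff]; omega
  have h1 := (admissible_up hL' i hi hup (k - (i + 1)) (by omega)).1
  have h2 := admissible_bound hL (i + 1) (k - (i + 1)) (by omega)
  rw [hlastL] at hlast
  omega

/-- A path with fixed endpoint labels admits at most one admissible labeling. -/
theorem admissible_unique_given_endpoints (k : ℕ) (hk : 1 ≤ k)
    (L L' : Fin (k + 1) → ℕ) (hL : Admissible L) (hL' : Admissible L')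
    (h0 : L 0 = L' 0) (hlast : L (Fin.last k) = L' (Fin.last k)) :
    L = L' := by
  have key : ∀ i : ℕ, ∀ h : i ≤ k, L ⟨i, by omega⟩ = L' ⟨i, by omega⟩ := by
    intro i
    induction i with
    | zero =>
      intro h
      simpa using h0
    | succ i ih =>
      intro h
      have heq := ih (by omega)
      have hs := admissible_step hL i (by omega)
      have hs' := admissible_step hL' i (by omega)
      rcases hs with ⟨h1, h2⟩ | ⟨h1, h2⟩ | h1 <;>
        rcases hs' with ⟨h1', h2'⟩ | ⟨h1', h2'⟩ | h1'
      · omega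
      · omega
      · exact absurd (admissible_contra hL hL' hlast i (by omega) h1' (by omega)) id
      · omega
      · omega
      · exact absurd (admissible_contra hL hL' hlast i (by omega) h1' (by omega)) id
      · exact absurd (admissible_contra hL' hL hlast.symm i (by omega) h1 (by omega)) id
      · exact absurd (admissible_contra hL' hL hlast.symm i (by omega) h1 (by omega)) id
      · omega
  funext j
  have hj := j.isLt
  have := key j.val (by omega)
  simpa [Fin.eta] using this
end

section
/- Let i be a natural number and let L, L' : Fin (4i+2) → ℕ both be admissible sequences. If the number of indices j with L(j) ≠ L'(j) is at most 2i, then L(2i) = L'(2i) and L(2i+1) = L'(2i+1). -/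
namespace AdmissibleAux

variable {n : ℕ}

/-- Value of `L` at a natural index (0 out of range). -/
def val (L : Fin n → ℕ) (k : ℕ) : ℕ := if h : k < n then L ⟨k, h⟩ else 0

lemma val_eq (L : Fin n → ℕ) {k : ℕ} (h : k < n) : val L k = L ⟨k, h⟩ := dif_pos h

lemma step_precise {L : Fin n → ℕ} (hL : Admissible L) {k : ℕ} (h : k + 1 < n)
    (h0 : val L k ≠ 0) :
    val L (k + 1) + 1 = val L k ∨ val L (k + 1) = val L k + 1 := by
  have hk : k < n := by omega
  rw [val_eq L hk] at h0
  rw [val_eq L h, val_eq L hk]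
  have := (hL ⟨k, hk⟩ h0).1 ⟨k + 1, h⟩ (Or.inl rfl)
  omega

lemma step_bound {L : Fin n → ℕ} (hL : Admissible L) {k : ℕ} (h : k + 1 < n) :
    val L (k + 1) ≤ val L k + 1 ∧ val L k ≤ val L (k + 1) + 1 := by
  by_cases h0 : val L k = 0
  · by_cases h1 : val L (k + 1) = 0
    · omega
    · have hk : k < n := by omega
      have h1' : L ⟨k + 1, h⟩ ≠ 0 := by rwa [val_eq L h] at h1
      have := (hL ⟨k + 1, h⟩ h1').1 ⟨k, hk⟩ (Or.inr rfl)
      rw [val_eq L hk] at h0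
      rw [val_eq L hk, val_eq L h]
      omega
  · rcases step_precise hL h h0 with h' | h' <;> omega

lemma growth {L : Fin n → ℕ} (hL : Admissible L) (p : ℕ) :
    ∀ d, p + d < n → val L (p + d) ≤ val L p + d := by
  intro d
  induction d with
  | zero => intro _; exact le_rfl
  | succ d ih =>
    intro h
    have h' : p + d + 1 < n := by omega
    have hb := (step_bound hL h').1
    have := ih (by omega)
    show val L (p + d + 1) ≤ val L p + (d + 1)
    omega

lemma ascend {L : Fin n → ℕ} (hL : Admissible L) {p : ℕ} (hp : p + 1 < n)
    (hx : val L p + 1 = val L (p + 1)) :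
    ∀ d, p + 1 + d < n → val L (p + 1 + d) = val L (p + 1) + d := by
  have key : ∀ d, p + 1 + d < n →
      val L (p + 1 + d) = val L (p + 1) + d ∧
      val L (p + d) + 1 = val L (p + 1 + d) := by
    intro d
    induction d with
    | zero => intro _; exact ⟨rfl, hx⟩
    | succ d ih =>
      intro h
      have h' : p + 1 + d < n := by omega
      obtain ⟨e1, e2⟩ := ih h'
      have h2 : p + 1 + d + 1 < n := by omega
      have hd : p + d < n := by omega
      have hv : L ⟨p + 1 + d, h'⟩ ≠ 0 := by rw [← val_eq L h']; omega
      obtain ⟨hall, huniq⟩ := hL ⟨p + 1 + d, h'⟩ hv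
      have hnext := hall ⟨p + 1 + d + 1, h2⟩ (Or.inl rfl)
      rw [← val_eq L h2, ← val_eq L h'] at hnext
      rcases hnext with hdown | hup
      · exfalso
        have hprev : L ⟨p + d, hd⟩ = L ⟨p + 1 + d, h'⟩ - 1 := by
          rw [← val_eq L hd, ← val_eq L h']; omega
        have hdown' : L ⟨p + 1 + d + 1, h2⟩ = L ⟨p + 1 + d, h'⟩ - 1 := by
          rw [← val_eq L h2, ← val_eq L h']; omega
        have heq := huniq ⟨p + d, hd⟩ ⟨p + 1 + d + 1, h2⟩
          (Or.inr (show p + d + 1 = p + 1 + d by omega)) (Or.inl rfl) hprev hdown'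
        have : p + d = p + 1 + d + 1 := congrArg Fin.val heq
        omega
      · show val L (p + 1 + d + 1) = val L (p + 1) + (d + 1) ∧
          val L (p + d + 1) + 1 = val L (p + 1 + d + 1)
        have e3 : p + d + 1 = p + 1 + d := by omega
        rw [e3]
        omega
  exact fun d h => (key d h).1

lemma key_le {L L' : Fin n → ℕ} (hL : Admissible L) (hL' : Admissible L') {p d : ℕ}
    (h : p + d + 1 < n) (hp : val L p = val L' p)
    (hq : val L (p + d + 1) = val L' (p + d + 1)) :
    val L (p + 1) ≤ val L' (p + 1) := by
  by_contra hgt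
  push_neg at hgt
  have h1 : p + 1 < n := by omega
  by_cases h0 : val L p = 0
  · have hb := (step_bound hL h1).1
    have hx : val L p + 1 = val L (p + 1) := by omega
    have ha := ascend hL h1 hx d (by omega)
    have hg := growth hL' (p + 1) d (by omega)
    have e : p + 1 + d = p + d + 1 := by omega
    rw [e] at ha hg
    omega
  · have h0' : val L' p ≠ 0 := by rwa [hp] at h0
    rcases step_precise hL h1 h0 with hA | hA
    · rcases step_precise hL' h1 h0' with hB | hB <;> omega
    · have hx : val L p + 1 = val L (p + 1) := by omega
      have ha := ascend hL h1 hx d (by omega)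
      have hg := growth hL' (p + 1) d (by omega)
      have e : p + 1 + d = p + d + 1 := by omega
      rw [e] at ha hg
      rcases step_precise hL' h1 h0' with hB | hB <;> omega

lemma agree {L L' : Fin n → ℕ} (hL : Admissible L) (hL' : Admissible L') :
    ∀ d p, p + d < n → val L p = val L' p → val L (p + d) = val L' (p + d) →
      ∀ e, e ≤ d → val L (p + e) = val L' (p + e) := by
  intro d
  induction d with
  | zero =>
    intro p _ hp _ e he
    have : e = 0 := by omega
    subst this
    exact hp
  | succ d ih =>
    intro p h hp hq e he
    have hq' : val L (p + d + 1) = val L' (p + d + 1) := by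
      rw [show p + d + 1 = p + (d + 1) by omega]; exact hq
    have hstep : val L (p + 1) = val L' (p + 1) :=
      le_antisymm (key_le hL hL' (by omega) hp hq')
        (key_le hL' hL (by omega) hp.symm hq'.symm)
    cases e with
    | zero => exact hp
    | succ e' =>
      have hq'' : val L (p + 1 + d) = val L' (p + 1 + d) := by
        rw [show p + 1 + d = p + d + 1 by omega]; exact hq'
      have := ih (p + 1) (by omega) hstep hq'' e' (by omega)
      rw [show p + 1 + e' = p + (e' + 1) by omega] at this
      exact this

end AdmissibleAux

set_option maxHeartbeats 1000000 in
open AdmissibleAux in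
/-- Two admissible labelings of a long path that disagree in at most `2i` positions
agree on the two central positions. -/
theorem admissible_long_path_central_agreement (i : ℕ)
    (L L' : Fin (4 * i + 2) → ℕ) (hL : Admissible L) (hL' : Admissible L')
    (hdis : (Finset.univ.filter fun j : Fin (4 * i + 2) => L j ≠ L' j).card ≤ 2 * i) :
    L ⟨2 * i, by omega⟩ = L' ⟨2 * i, by omega⟩ ∧
    L ⟨2 * i + 1, by omega⟩ = L' ⟨2 * i + 1, by omega⟩ := by
  set S := Finset.univ.filter fun j : Fin (4 * i + 2) => L j ≠ L' j with hS
  -- an agreement point in the left half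
  have hleft : ∃ p : ℕ, p ≤ 2 * i ∧ val L p = val L' p := by
    by_contra hc
    push_neg at hc
    have him : Finset.univ.image
        (fun a : Fin (2 * i + 1) => (⟨(a : ℕ), by omega⟩ : Fin (4 * i + 2))) ⊆ S := by
      intro j hj
      simp only [Finset.mem_image, Finset.mem_univ, true_and] at hj
      obtain ⟨a, rfl⟩ := hj
      simp only [hS, Finset.mem_filter, Finset.mem_univ, true_and]
      have := hc (a : ℕ) (by omega)
      rw [val_eq L (show (a : ℕ) < 4 * i + 2 by omega),
        val_eq L' (show (a : ℕ) < 4 * i + 2 by omega)] at this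
      exact this
    have hinj : Function.Injective
        (fun a : Fin (2 * i + 1) => (⟨(a : ℕ), by omega⟩ : Fin (4 * i + 2))) := by
      intro a b hab
      have := congrArg Fin.val hab
      exact Fin.ext (by simpa using this)
    have hcard := Finset.card_le_card him
    rw [Finset.card_image_of_injective _ hinj, Finset.card_univ, Fintype.card_fin] at hcard
    omega
  -- an agreement point in the right half
  have hright : ∃ q : ℕ, 2 * i + 1 ≤ q ∧ q ≤ 4 * i + 1 ∧ val L q = val L' q := by
    by_contra hc
    push_neg at hc
    have him : Finset.univ.image
        (fun a : Fin (2 * i + 1) => (⟨2 * i + 1 + (a : ℕ), by omega⟩ : Fin (4 * i + 2))) ⊆ S := by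
      intro j hj
      simp only [Finset.mem_image, Finset.mem_univ, true_and] at hj
      obtain ⟨a, rfl⟩ := hj
      simp only [hS, Finset.mem_filter, Finset.mem_univ, true_and]
      have := hc (2 * i + 1 + (a : ℕ)) (by omega) (by omega)
      rw [val_eq L (show 2 * i + 1 + (a : ℕ) < 4 * i + 2 by omega),
        val_eq L' (show 2 * i + 1 + (a : ℕ) < 4 * i + 2 by omega)] at this
      exact this
    have hinj : Function.Injective
        (fun a : Fin (2 * i + 1) => (⟨2 * i + 1 + (a : ℕ), by omega⟩ : Fin (4 * i + 2))) := by
      intro a b hab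
      have := congrArg Fin.val hab
      exact Fin.ext (by simp at this; omega)
    have hcard := Finset.card_le_card him
    rw [Finset.card_image_of_injective _ hinj, Finset.card_univ, Fintype.card_fin] at hcard
    omega
  obtain ⟨p, hp2i, hpagree⟩ := hleft
  obtain ⟨q, hq1, hq2, hqagree⟩ := hright
  have hqagree' : val L (p + (q - p)) = val L' (p + (q - p)) := by
    rw [show p + (q - p) = q by omega]; exact hqagree
  have hmain := agree hL hL' (q - p) p (by omega) hpagree hqagree'
  have h2i := hmain (2 * i - p) (by omega)
  have h2i1 := hmain (2 * i + 1 - p) (by omega)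
  rw [show p + (2 * i - p) = 2 * i by omega] at h2i
  rw [show p + (2 * i + 1 - p) = 2 * i + 1 by omega] at h2i1
  have ha : 2 * i < 4 * i + 2 := by omega
  have hb : 2 * i + 1 < 4 * i + 2 := by omega
  exact ⟨(val_eq L ha).symm.trans (h2i.trans (val_eq L' ha)),
    (val_eq L hb).symm.trans (h2i1.trans (val_eq L' hb))⟩
end

section
/- Let i ≥ 1 be a natural number and let Λ be any type. There is no view-distance-i verifier A over the label type Λ satisfying both: (error-tolerant completeness) for every n and every connected bipartite simple graph G on Fin n (i.e., G admits a proper 2-coloring), there exists an oracular labeling L_O : Fin n → Λ such that every labeling L : Fin n → Λ that differs from L_O at no more than i vertices satisfies A(G, L, v) = true for every vertex v; and (soundness) for every n and every connected simple graph G on Fin n that is not bipartite, for every labeling L : Fin n → Λ there exists a vertex v with A(G, L, v) = false. -/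
/-!
The even cycle `C (2i+2)` is 2-colorable and the odd cycle `C (2i+3)` is not, yet in both every
radius-`i` ball is a path on `2i+1` vertices. Label `C (2i+3)` by the oracle labeling of
`C (2i+2)` read with vertex indices mod `2i+2`; as periodic sequences indexed by `ℤ`, the two
labelings then agree on `0, …, 2i+2`. Around a vertex `v'` of the odd cycle, the window
`v' - i, …, v' + i` leaves that segment on at most one side, hence in at most `i` places.
Copying the window's labels onto the ball around `v' mod (2i+2)` in the even cycle therefore
changes at most `i` oracle labels, so the verifier accepts there, and by locality also at `v'`,
for every `v'`, against soundness.
-/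

open SimpleGraph

theorem Set.InjOn.exists_extend_ncard_ne_le {α β γ : Type*} {f : α → β} {s : Set α}
    (hf : s.InjOn f) (hs : s.Finite) (g : α → γ) (e : β → γ) :
    ∃ L : β → γ, (∀ a ∈ s, L (f a) = g a) ∧
      {b | L b ≠ e b}.ncard ≤ {a ∈ s | g a ≠ e (f a)}.ncard := by
  classical
  refine ⟨Function.extend (s.domRestrict f) (s.domRestrict g) e,
    fun a ha => hf.injective.extend_apply _ _ ⟨a, ha⟩, ?_⟩
  have hsub : {b | Function.extend (s.domRestrict f) (s.domRestrict g) e b ≠ e b} ⊆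
      f '' {a ∈ s | g a ≠ e (f a)} := by
    intro b hb
    by_cases hb' : ∃ a, s.domRestrict f a = b
    · obtain ⟨⟨a, ha⟩, rfl⟩ := hb'
      exact ⟨a, ⟨ha, by rwa [Set.mem_ofPred_eq, hf.injective.extend_apply] at hb⟩, rfl⟩
    · exact absurd (Function.extend_apply' _ _ _ hb') hb
  exact (Set.ncard_le_ncard hsub ((hs.subset fun a ha => ha.1).image f)).trans
    (Set.ncard_image_le (hs.subset fun a ha => ha.1))

theorem ncard_Icc_filter_add_notMem_Ico_le {i : ℕ} {c m : ℤ} (hc : c ∈ Set.Ico 0 m)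
    (hm : 2 * i ≤ m) : {s ∈ Set.Icc (-(i : ℤ)) i | c + s ∉ Set.Ico 0 m}.ncard ≤ i := by
  have hIcc : ∀ a b : ℤ, (Set.Icc a b).ncard = (b + 1 - a).toNat := fun a b => by
    rw [← Finset.coe_Icc, Set.ncard_coe_finset, Int.card_Icc]
  rw [Set.mem_Ico] at hc
  rcases lt_or_ge c i with hci | hci
  · calc _ ≤ (Set.Icc (-(i : ℤ)) (-1)).ncard := by
          refine Set.ncard_le_ncard ?_ (Set.finite_Icc _ _)
          rintro s ⟨hs, hout⟩
          rw [Set.mem_Icc, Set.mem_Ico] at *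
          omega
      _ = i := by rw [hIcc]; omega
  · calc _ ≤ (Set.Icc (1 : ℤ) i).ncard := by
          refine Set.ncard_le_ncard ?_ (Set.finite_Icc _ _)
          rintro s ⟨hs, hout⟩
          rw [Set.mem_Icc, Set.mem_Ico] at *
          omega
      _ = i := by rw [hIcc]; omega

section CycleGraph

open Fin.CommRing

theorem Fin.intCast_inj_of_abs_sub_lt {n : ℕ} [NeZero n] {a b : ℤ} (h : |a - b| < n) :
    (a : Fin n) = b ↔ a = b := by
  rw [CharP.intCast_eq_intCast (Fin n) n]
  refine ⟨fun hab => ?_, fun hab => hab ▸ rfl⟩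
  have := Int.eq_zero_of_abs_lt_dvd hab.dvd (by rwa [abs_sub_comm])
  omega

theorem Fin.add_intCast_injOn_Icc {n i : ℕ} [NeZero n] (v : Fin n) (h : 2 * i < n) :
    Set.InjOn (fun s : ℤ => v + s) (Set.Icc (-(i : ℤ)) i) := by
  intro s hs t ht hst
  rw [Set.mem_Icc] at hs ht
  refine (Fin.intCast_inj_of_abs_sub_lt ?_).1 (add_left_cancel hst)
  rw [abs_lt]
  omega

namespace SimpleGraph

variable {n : ℕ}

theorem cycleGraph_adj_add_intCast (v : Fin (n + 2)) {s t : ℤ} (h : |s - t| ≤ n) :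
    (cycleGraph (n + 2)).Adj (v + s) (v + t) ↔ s - t = 1 ∨ t - s = 1 := by
  have hsub : ∀ a b : ℤ, v + a - (v + b) = ((a - b : ℤ) : Fin (n + 2)) := fun a b => by
    push_cast; ring
  rw [cycleGraph_adj, hsub, hsub, ← Int.cast_one, Fin.intCast_inj_of_abs_sub_lt,
    Fin.intCast_inj_of_abs_sub_lt] <;>
  · rw [abs_lt]; rw [abs_le] at h; push_cast; omega

theorem cycleGraph_exists_eq_add_intCast_of_walk {u w : Fin (n + 2)}
    (p : (cycleGraph (n + 2)).Walk u w) : ∃ s : ℤ, |s| ≤ p.length ∧ w = u + s := by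
  induction p with
  | nil => exact ⟨0, by simp⟩
  | @cons u x w hux p ih =>
    obtain ⟨s, hs, rfl⟩ := ih
    rw [Walk.length_cons, Nat.cast_succ]
    rcases hux with h | h
    · refine ⟨s - 1, by rw [abs_le] at hs ⊢; omega, ?_⟩
      push_cast
      linear_combination -h
    · refine ⟨s + 1, by rw [abs_le] at hs ⊢; omega, ?_⟩
      push_cast
      linear_combination h

theorem cycleGraph_dist_add_natCast_le (u : Fin (n + 2)) (k : ℕ) :
    (cycleGraph (n + 2)).dist u (u + k) ≤ k := by
  induction k with
  | zero => simp
  | succ k ih =>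
    have hadj : (cycleGraph (n + 2)).Adj (u + k) (u + (k + 1 : ℕ)) := by
      rw [cycleGraph_adj]; right; push_cast; ring
    calc (cycleGraph (n + 2)).dist u (u + (k + 1 : ℕ))
        ≤ (cycleGraph (n + 2)).dist u (u + k) +
            (cycleGraph (n + 2)).dist (u + k) (u + (k + 1 : ℕ)) :=
          cycleGraph_connected.dist_triangle
      _ ≤ k + 1 := by rw [dist_eq_one_iff_adj.mpr hadj]; omega

theorem cycleGraph_dist_add_intCast_le (u : Fin (n + 2)) (s : ℤ) :
    (cycleGraph (n + 2)).dist u (u + s) ≤ s.natAbs := by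
  obtain ⟨k, rfl | rfl⟩ := Int.eq_nat_or_neg s
  · simpa using cycleGraph_dist_add_natCast_le u k
  · rw [dist_comm]
    simpa [← sub_eq_add_neg] using cycleGraph_dist_add_natCast_le (u - (k : Fin (n + 2))) k

theorem cycleGraph_dist_le_iff {i : ℕ} {v u : Fin (n + 2)} :
    (cycleGraph (n + 2)).dist v u ≤ i ↔ ∃ s ∈ Set.Icc (-(i : ℤ)) i, v + s = u := by
  constructor
  · intro h
    have hconn : (cycleGraph (n + 2)).Connected := cycleGraph_connected
    obtain ⟨p, hp⟩ := (hconn.preconnected v u).exists_walk_length_eq_dist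
    obtain ⟨s, hs, rfl⟩ := cycleGraph_exists_eq_add_intCast_of_walk p
    refine ⟨s, ?_, rfl⟩
    rw [Set.mem_Icc, ← abs_le]
    omega
  · rintro ⟨s, hs, rfl⟩
    have := cycleGraph_dist_add_intCast_le v s
    rw [Set.mem_Icc] at hs
    omega

noncomputable def cycleGraphBallEquiv (v : Fin (n + 2)) (i : ℕ) (h : 2 * i < n + 2) :
    Set.Icc (-(i : ℤ)) i ≃ {u | (cycleGraph (n + 2)).dist v u ≤ i} :=
  Equiv.ofBijective (fun s => ⟨v + s, cycleGraph_dist_le_iff.2 ⟨s, s.2, rfl⟩⟩)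
    ⟨fun s t hst =>
      Subtype.ext (Fin.add_intCast_injOn_Icc v h s.2 t.2 (congrArg Subtype.val hst)),
     fun u => by
      obtain ⟨s, hs, hsu⟩ := cycleGraph_dist_le_iff.1 u.2
      exact ⟨⟨s, hs⟩, Subtype.ext hsu⟩⟩

theorem cycleGraphBallEquiv_apply_coe (v : Fin (n + 2)) {i : ℕ} (h : 2 * i < n + 2)
    (s : Set.Icc (-(i : ℤ)) i) : (cycleGraphBallEquiv v i h s : Fin (n + 2)) = v + s :=
  rfl

noncomputable def cycleGraphBallIso {n' i : ℕ} (hn : 2 * i ≤ n) (hn' : 2 * i ≤ n')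
    (v : Fin (n + 2)) (v' : Fin (n' + 2)) :
    (cycleGraph (n + 2)).induce {u | (cycleGraph (n + 2)).dist v u ≤ i} ≃g
      (cycleGraph (n' + 2)).induce {u | (cycleGraph (n' + 2)).dist v' u ≤ i} where
  toEquiv :=
    (cycleGraphBallEquiv v i (by omega)).symm.trans (cycleGraphBallEquiv v' i (by omega))
  map_rel_iff' {a b} := by
    obtain ⟨s, rfl⟩ := (cycleGraphBallEquiv v i (by omega)).surjective a
    obtain ⟨t, rfl⟩ := (cycleGraphBallEquiv v i (by omega)).surjective b
    have hst : |(s : ℤ) - t| ≤ 2 * i := by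
      have hs := s.2; have ht := t.2; rw [Set.mem_Icc] at hs ht; rw [abs_le]; omega
    simp only [Equiv.trans_apply, Equiv.symm_apply_apply, comap_adj,
      Function.Embedding.subtype_apply, cycleGraphBallEquiv_apply_coe,
      cycleGraph_adj_add_intCast _ (hst.trans (by exact_mod_cast hn)),
      cycleGraph_adj_add_intCast _ (hst.trans (by exact_mod_cast hn'))]

theorem cycleGraphBallIso_apply {n' i : ℕ} (hn : 2 * i ≤ n) (hn' : 2 * i ≤ n')
    (v : Fin (n + 2)) (v' : Fin (n' + 2)) (s : Set.Icc (-(i : ℤ)) i) :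
    cycleGraphBallIso hn hn' v v' (cycleGraphBallEquiv v i (by omega) s) =
      cycleGraphBallEquiv v' i (by omega) s :=
  congrArg (cycleGraphBallEquiv v' i (by omega))
    ((cycleGraphBallEquiv v i (by omega)).symm_apply_apply s)

end SimpleGraph

theorem IsLocalVerifier.apply_cycleGraph_eq {Λ : Type*} {i : ℕ}
    {A : ∀ n : ℕ, SimpleGraph (Fin n) → (Fin n → Λ) → Fin n → Bool} (hA : IsLocalVerifier Λ i A)
    {n n' : ℕ} (hn : 2 * i ≤ n) (hn' : 2 * i ≤ n') {L : Fin (n + 2) → Λ}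
    {L' : Fin (n' + 2) → Λ} {v : Fin (n + 2)} {v' : Fin (n' + 2)}
    (hL : ∀ s ∈ Set.Icc (-(i : ℤ)) i, L (v + s) = L' (v' + s)) :
    A (n + 2) (cycleGraph (n + 2)) L v = A (n' + 2) (cycleGraph (n' + 2)) L' v' := by
  have hcenter : (0 : ℤ) ∈ Set.Icc (-(i : ℤ)) i := by simp
  refine hA _ _ _ _ L L' v v' (cycleGraphBallIso hn hn' v v') (by simp) ?_ ?_
  · have hv : (⟨v, by simp⟩ : {u | (cycleGraph (n + 2)).dist v u ≤ i}) =
        cycleGraphBallEquiv v i (by omega) ⟨0, hcenter⟩ :=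
      Subtype.ext (by simp [cycleGraphBallEquiv_apply_coe])
    rw [hv, cycleGraphBallIso_apply, cycleGraphBallEquiv_apply_coe]
    simp
  · intro u
    obtain ⟨s, rfl⟩ := (cycleGraphBallEquiv v i (by omega)).surjective u
    rw [cycleGraphBallIso_apply, cycleGraphBallEquiv_apply_coe, cycleGraphBallEquiv_apply_coe]
    exact (hL s s.2).symm

def wrapLabeling {Λ : Type*} {k : ℕ} [NeZero k] (L : Fin k → Λ) (m : ℕ) : Fin m → Λ :=
  fun u => L u.val

theorem wrapLabeling_add_intCast {Λ : Type*} {k m : ℕ} [NeZero k] [NeZero m] (L : Fin k → Λ)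
    (v : Fin m) {s : ℤ} (h : v.val + s ∈ Set.Ico 0 (m : ℤ)) :
    wrapLabeling L m (v + s) = L ((v.val : Fin k) + s) := by
  rw [Set.mem_Ico] at h
  obtain ⟨a, ha⟩ := Int.eq_ofNat_of_zero_le h.1
  have hv : v + (s : Fin m) = (a : Fin m) := by
    rw [← Int.cast_natCast, ← ha]; push_cast; rfl
  have hak : ((a : ℤ) : Fin k) = (v.val : Fin k) + s := by rw [← ha]; push_cast; rfl
  rw [wrapLabeling, hv, Fin.val_natCast, Nat.mod_eq_of_lt (by omega), ← hak, Int.cast_natCast]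

theorem exists_relabeling_eq_wrapLabeling {Λ : Type*} {i k m : ℕ} [NeZero k] [NeZero m]
    (hk : 2 * i < k) (hm : 2 * i ≤ m) (L_O : Fin k → Λ) (v' : Fin m) :
    ∃ (v : Fin k) (L : Fin k → Λ), {w | L w ≠ L_O w}.ncard ≤ i ∧
      ∀ s ∈ Set.Icc (-(i : ℤ)) i, L (v + s) = wrapLabeling L_O m (v' + s) := by
  obtain ⟨L, hL, hcount⟩ :=
    (Fin.add_intCast_injOn_Icc (v'.val : Fin k) hk).exists_extend_ncard_ne_le
      (Set.finite_Icc _ _) (fun s => wrapLabeling L_O m (v' + s)) L_O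
  have hbad : {s ∈ Set.Icc (-(i : ℤ)) i | wrapLabeling L_O m (v' + s) ≠ L_O (v'.val + s)} ⊆
      {s ∈ Set.Icc (-(i : ℤ)) i | v'.val + s ∉ Set.Ico 0 (m : ℤ)} :=
    fun s ⟨hs, hne⟩ => ⟨hs, fun h => hne (wrapLabeling_add_intCast L_O v' h)⟩
  refine ⟨_, L, hcount.trans ?_, hL⟩
  exact (Set.ncard_le_ncard hbad ((Set.finite_Icc _ _).subset fun s hs => hs.1)).trans
    (ncard_Icc_filter_add_notMem_Ico_le ⟨by positivity, by exact_mod_cast v'.isLt⟩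
      (by exact_mod_cast hm))

end CycleGraph

namespace SimpleGraph

theorem cycleGraph_colorable_two_of_even {n : ℕ} (h : Even n) : (cycleGraph n).Colorable 2 := by
  simpa using (cycleGraph.bicoloring_of_even n h).colorable

theorem cycleGraph_not_colorable_two_of_odd {n : ℕ} (h2 : 2 ≤ n) (h : Odd n) :
    ¬ (cycleGraph n).Colorable 2 := fun hc => by
  have := hc.chromaticNumber_le
  rw [chromaticNumber_cycleGraph_of_odd n h2 h] at this
  norm_num at this

end SimpleGraph

theorem no_error_tolerant_bipartiteness_general (i : ℕ) (Λ : Type) :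
    ¬ ∃ A : ∀ n : ℕ, SimpleGraph (Fin n) → (Fin n → Λ) → Fin n → Bool,
      IsLocalVerifier Λ i A ∧
      (∀ (n : ℕ) (G : SimpleGraph (Fin n)), G.Connected → G.Colorable 2 →
        ∃ L_O : Fin n → Λ, ∀ L : Fin n → Λ,
          {v : Fin n | L v ≠ L_O v}.ncard ≤ i → ∀ v : Fin n, A n G L v = true) ∧
      (∀ (n : ℕ) (G : SimpleGraph (Fin n)), G.Connected → ¬ G.Colorable 2 →
        ∀ L : Fin n → Λ, ∃ v : Fin n, A n G L v = false) := by
  rintro ⟨A, hA, hcomplete, hsound⟩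
  obtain ⟨L_O, hL_O⟩ := hcomplete (2 * i + 2) (cycleGraph _) cycleGraph_connected
    (cycleGraph_colorable_two_of_even ⟨i + 1, by ring⟩)
  obtain ⟨v', hv'⟩ := hsound (2 * i + 3) (cycleGraph _) cycleGraph_connected
    (cycleGraph_not_colorable_two_of_odd (by omega) ⟨i + 1, by ring⟩) (wrapLabeling L_O _)
  obtain ⟨v, L, hL_err, hL⟩ :=
    exists_relabeling_eq_wrapLabeling (i := i) (by omega) (by omega) L_O v'
  have hsame := hA.apply_cycleGraph_eq (n := 2 * i) (n' := 2 * i + 1) le_rfl (by omega) hL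
  rw [← hsame, hL_O L hL_err v] at hv'
  simp at hv'

/-- Impossibility of error-resilient verification of bipartiteness: no
view-distance-`i` verifier tolerates `i` adversarial label errors in the whole
graph, with any label type. -/
theorem no_error_tolerant_bipartiteness (i : ℕ) (hi : 1 ≤ i) (Λ : Type) :
    ¬ ∃ A : ∀ n : ℕ, SimpleGraph (Fin n) → (Fin n → Λ) → Fin n → Bool,
      IsLocalVerifier Λ i A ∧
      (∀ (n : ℕ) (G : SimpleGraph (Fin n)), G.Connected → G.Colorable 2 →
        ∃ L_O : Fin n → Λ, ∀ L : Fin n → Λ,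
          {v : Fin n | L v ≠ L_O v}.ncard ≤ i → ∀ v : Fin n, A n G L v = true) ∧
      (∀ (n : ℕ) (G : SimpleGraph (Fin n)), G.Connected → ¬ G.Colorable 2 →
        ∀ L : Fin n → Λ, ∃ v : Fin n, A n G L v = false) :=
  no_error_tolerant_bipartiteness_general i Λ
end

section
/- Let k be a natural number and let L : Fin (k+1) → ℕ be an admissible sequence with L(0) = 0 and L(k) = 0. Then L(j) = 0 for every index j. -/
/-- On a path whose two endpoints carry the label `0`, the only admissible labeling
assigns `0` everywhere. -/
theorem admissible_zero_endpoints_all_zero (k : ℕ)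
    (L : Fin (k + 1) → ℕ) (hL : Admissible L)
    (h0 : L 0 = 0) (hlast : L (Fin.last k) = 0) :
    ∀ j : Fin (k + 1), L j = 0 := by
  -- take an index maximizing L
  obtain ⟨j, -, hmax⟩ := Finset.exists_max_image Finset.univ L ⟨0, Finset.mem_univ 0⟩
  have hjz : L j = 0 := by
    by_contra hne
    obtain ⟨hadj, huniq⟩ := hL j hne
    -- j is not an endpoint
    have hj0 : (j : ℕ) ≠ 0 := by
      intro h
      exact hne (by have : j = 0 := Fin.ext h; rw [this, h0])
    have hjk : (j : ℕ) ≠ k := by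
      intro h
      exact hne (by have : j = Fin.last k := Fin.ext h; rw [this, hlast])
    have hj1 : 1 ≤ (j : ℕ) := Nat.one_le_iff_ne_zero.mpr hj0
    have hjk' : (j : ℕ) < k := lt_of_le_of_ne (Nat.lt_succ_iff.mp j.isLt) hjk
    set j₁ : Fin (k + 1) := ⟨(j : ℕ) - 1, by omega⟩
    set j₂ : Fin (k + 1) := ⟨(j : ℕ) + 1, by omega⟩
    have a1 : AdjIdx j j₁ := Or.inr (by simp [j₁]; omega)
    have a2 : AdjIdx j j₂ := Or.inl rfl
    have le1 : L j₁ ≤ L j := hmax j₁ (Finset.mem_univ _)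
    have le2 : L j₂ ≤ L j := hmax j₂ (Finset.mem_univ _)
    have e1 : L j₁ = L j - 1 := by
      rcases hadj j₁ a1 with h | h
      · exact h
      · omega
    have e2 : L j₂ = L j - 1 := by
      rcases hadj j₂ a2 with h | h
      · exact h
      · omega
    have := huniq j₁ j₂ a1 a2 e1 e2
    have : (j : ℕ) - 1 = (j : ℕ) + 1 := congrArg Fin.val this
    omega
  intro i
  have := hmax i (Finset.mem_univ _)
  omega
end

section
/- Let V be a finite nonempty type and let G be a connected simple graph on V. Then G contains a cycle (i.e., G is not acyclic) if and only if there exists a labeling L : V → ℕ such that every vertex v satisfies the n-label acceptance condition: either L v = 0, v has at least two neighbors u with L u = 0, and every neighbor w of v has L w ≤ 1; or L v ≠ 0, exactly one neighbor u of v has L u = L v - 1, and every other neighbor w of v has L w = L v + 1. -/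
/-!
If `G` has a cycle, its `2`-core `Z` (the largest vertex set in which every vertex has two
neighbours inside the set) is nonempty, and labelling every vertex by its distance to `Z` is
accepted. The only nontrivial check is that a vertex `v ∉ Z` has a single neighbour not farther
from `Z` than itself: two such neighbours `u ≠ w` would have shortest paths to `Z` avoiding `v`,
and `Z` together with these paths and `v` would again have minimum degree two, so `v ∈ Z`.
Conversely, the vertices labelled `0` of an accepted labelling form a nonempty set of minimum
degree two, and greedily extending a path inside such a set never revisits a vertex in a forest.
-/

/-- A vertex `v` satisfies the n-label acceptance condition with respect to graph
`G` and labeling `L : V → ℕ`. -/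
def AcceptN {V : Type*} (G : SimpleGraph V) (L : V → ℕ) (v : V) : Prop :=
  (L v = 0 ∧ (∃ u w, u ≠ w ∧ G.Adj v u ∧ G.Adj v w ∧ L u = 0 ∧ L w = 0) ∧
      (∀ w, G.Adj v w → L w ≤ 1)) ∨
  (L v ≠ 0 ∧ (∃ u, G.Adj v u ∧ L u = L v - 1 ∧
      (∀ w, G.Adj v w → w ≠ u → L w = L v + 1)))

namespace SimpleGraph

variable {V : Type*} {G : SimpleGraph V}

def InducesMinDegreeTwo (G : SimpleGraph V) (S : Set V) : Prop :=
  ∀ v ∈ S, ∃ u w, u ≠ w ∧ G.Adj v u ∧ G.Adj v w ∧ u ∈ S ∧ w ∈ S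

namespace Walk

variable {a b x : V}

lemma exists_adj_adj_of_ncard_neighborSet_toSubgraph_eq_two {p : G.Walk a b}
    (h : (p.toSubgraph.neighborSet x).ncard = 2) :
    ∃ u w, u ≠ w ∧ G.Adj x u ∧ G.Adj x w ∧ u ∈ p.support ∧ w ∈ p.support := by
  obtain ⟨u, w, huw, hnbr⟩ := Set.ncard_eq_two.mp h
  have hu : p.toSubgraph.Adj x u := by
    rw [← Subgraph.mem_neighborSet, hnbr]; exact Set.mem_insert u _
  have hw : p.toSubgraph.Adj x w := by
    rw [← Subgraph.mem_neighborSet, hnbr]; exact Set.mem_insert_of_mem u rfl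
  exact ⟨u, w, huw, hu.adj_sub, hw.adj_sub, p.mem_verts_toSubgraph.mp hu.snd_mem,
    p.mem_verts_toSubgraph.mp hw.snd_mem⟩

lemma IsCycle.inducesMinDegreeTwo_support {c : G.Walk a a} (hc : c.IsCycle) :
    G.InducesMinDegreeTwo {x | x ∈ c.support} := fun _ hx =>
  exists_adj_adj_of_ncard_neighborSet_toSubgraph_eq_two (hc.ncard_neighborSet_toSubgraph_eq_two hx)

lemma IsPath.exists_adj_adj_of_mem_support {p : G.Walk a b} (hp : p.IsPath)
    (hx : x ∈ p.support) (hxa : x ≠ a) (hxb : x ≠ b) :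
    ∃ u w, u ≠ w ∧ G.Adj x u ∧ G.Adj x w ∧ u ∈ p.support ∧ w ∈ p.support := by
  obtain ⟨i, rfl, hi⟩ := mem_support_iff_exists_getVert.mp hx
  have hi0 : i ≠ 0 := by rintro rfl; exact hxa p.getVert_zero
  have hil : i < p.length := hi.lt_of_ne (by rintro rfl; exact hxb p.getVert_length)
  exact exists_adj_adj_of_ncard_neighborSet_toSubgraph_eq_two
    (hp.ncard_neighborSet_toSubgraph_internal_eq_two hi0 hil)

end Walk

open Walk

lemma IsAcyclic.exists_isPath_length_eq_of_inducesMinDegreeTwo (hG : G.IsAcyclic) {S : Set V}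
    (hS : G.InducesMinDegreeTwo S) (hne : S.Nonempty) (n : ℕ) :
    ∃ (a b : V) (p : G.Walk a b), p.IsPath ∧ (∀ x ∈ p.support, x ∈ S) ∧ p.length = n := by
  induction n with
  | zero =>
    obtain ⟨v, hv⟩ := hne
    exact ⟨v, v, nil, .nil, by simpa using hv, rfl⟩
  | succ n ih =>
    obtain ⟨a, b, p, hp, hpS, rfl⟩ := ih
    obtain ⟨u, w, huw, hau, haw, huS, hwS⟩ := hS a (hpS a p.start_mem_support)
    obtain ⟨x, hax, hxS, hx⟩ : ∃ x, G.Adj a x ∧ x ∈ S ∧ x ≠ p.snd := by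
      by_cases hu : u = p.snd
      · exact ⟨w, haw, hwS, fun hw => huw (hu.trans hw.symm)⟩
      · exact ⟨u, hau, huS, hu⟩
    have hxp : x ∉ p.support := fun hxp => hx (hG.eq_snd_of_adj_start hp hax hxp)
    refine ⟨x, b, cons hax.symm p, hp.cons hxp, ?_, rfl⟩
    simpa [support_cons] using ⟨hxS, hpS⟩

lemma InducesMinDegreeTwo.not_isAcyclic [Finite V] {S : Set V} (hS : G.InducesMinDegreeTwo S)
    (hne : S.Nonempty) : ¬ G.IsAcyclic := fun hG => by
  have := Fintype.ofFinite V
  obtain ⟨_, _, p, hp, -, hlen⟩ :=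
    hG.exists_isPath_length_eq_of_inducesMinDegreeTwo hS hne (Fintype.card V)
  exact hp.length_lt.ne hlen

/-- The paper's nodes "on cycles or on paths connecting cycles". -/
def twoCore (G : SimpleGraph V) : Set V :=
  {v | ∃ S, G.InducesMinDegreeTwo S ∧ v ∈ S}

lemma InducesMinDegreeTwo.subset_twoCore {S : Set V} (hS : G.InducesMinDegreeTwo S) :
    S ⊆ G.twoCore := fun _ hv => ⟨S, hS, hv⟩

lemma inducesMinDegreeTwo_twoCore : G.InducesMinDegreeTwo G.twoCore := by
  rintro v ⟨S, hS, hv⟩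
  obtain ⟨u, w, huw, hu, hw, huS, hwS⟩ := hS v hv
  exact ⟨u, w, huw, hu, hw, hS.subset_twoCore huS, hS.subset_twoCore hwS⟩

/-- Only meaningful for nonempty `Z`: `distToSet G ∅ = 0`. -/
noncomputable def distToSet (G : SimpleGraph V) (Z : Set V) (v : V) : ℕ :=
  sInf (G.dist v '' Z)

section distToSet

variable {Z : Set V} {u v w z : V}

lemma distToSet_le_dist (hz : z ∈ Z) : G.distToSet Z v ≤ G.dist v z :=
  Nat.sInf_le ⟨z, hz, rfl⟩

lemma exists_dist_eq_distToSet (G : SimpleGraph V) (hZ : Z.Nonempty) (v : V) :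
    ∃ z ∈ Z, G.dist v z = G.distToSet Z v :=
  Nat.sInf_mem (hZ.image _)

lemma distToSet_eq_zero_iff (hG : G.Connected) (hZ : Z.Nonempty) :
    G.distToSet Z v = 0 ↔ v ∈ Z := by
  refine ⟨fun h => ?_, fun hv => Nat.eq_zero_of_le_zero ((distToSet_le_dist hv).trans_eq dist_self)⟩
  obtain ⟨z, hz, hd⟩ := exists_dist_eq_distToSet G hZ v
  rwa [hG.dist_eq_zero_iff.mp (hd.trans h)]

lemma distToSet_le_of_adj (hG : G.Connected) (hZ : Z.Nonempty) (h : G.Adj v w) :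
    G.distToSet Z v ≤ G.distToSet Z w + 1 := by
  obtain ⟨z, hz, hd⟩ := exists_dist_eq_distToSet G hZ w
  calc G.distToSet Z v ≤ G.dist v z := distToSet_le_dist hz
    _ ≤ G.dist v w + G.dist w z := hG.dist_triangle
    _ = G.distToSet Z w + 1 := by rw [hd, dist_eq_one_iff_adj.mpr h, add_comm]

lemma exists_adj_distToSet_add_one_eq (hG : G.Connected) (hZ : Z.Nonempty) (hv : v ∉ Z) :
    ∃ u, G.Adj v u ∧ G.distToSet Z u + 1 = G.distToSet Z v := by
  obtain ⟨z, hz, hd⟩ := exists_dist_eq_distToSet G hZ v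
  obtain ⟨p, -, hp⟩ := hG.exists_path_of_dist v z
  have hnil : ¬ p.Nil := not_nil_of_ne (ne_of_mem_of_not_mem hz hv).symm
  have hlen := length_tail_add_one hnil
  have hsnd : G.distToSet Z p.snd ≤ p.tail.length :=
    (distToSet_le_dist hz).trans (dist_le p.tail)
  have := distToSet_le_of_adj hG hZ (p.adj_snd hnil)
  exact ⟨p.snd, p.adj_snd hnil, by omega⟩

lemma distToSet_lt_length {q : G.Walk w z} (hz : z ∈ Z) (hv : v ∈ q.support) (hvw : v ≠ w) :
    G.distToSet Z v < q.length := by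
  classical
  calc G.distToSet Z v ≤ G.dist v z := distToSet_le_dist hz
    _ ≤ (q.dropUntil v hv).length := dist_le _
    _ < q.length := length_dropUntil_lt_length hv hvw

lemma exists_isPath_cons_of_distToSet_le (hG : G.Connected) (hZ : Z.Nonempty) (hu : G.Adj v u)
    (hle : G.distToSet Z u ≤ G.distToSet Z v) :
    ∃ z ∈ Z, ∃ p : G.Walk u z, (cons hu p).IsPath := by
  obtain ⟨z, hz, hd⟩ := exists_dist_eq_distToSet G hZ u
  obtain ⟨p, hp, hlen⟩ := hG.exists_path_of_dist u z
  refine ⟨z, hz, p, (cons_isPath_iff hu p).mpr ⟨hp, fun hv => ?_⟩⟩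
  have := distToSet_lt_length hz hv hu.ne
  omega

end distToSet

variable {u v w : V}

lemma lt_distToSet_twoCore_of_adj (hG : G.Connected) (hZ : G.twoCore.Nonempty)
    (hv : v ∉ G.twoCore) (hu : G.Adj v u) (hw : G.Adj v w) (huw : u ≠ w)
    (hlu : G.distToSet G.twoCore u ≤ G.distToSet G.twoCore v) :
    G.distToSet G.twoCore v < G.distToSet G.twoCore w := by
  by_contra! hlw
  obtain ⟨zu, hzu, pu, hpu⟩ := exists_isPath_cons_of_distToSet_le hG hZ hu hlu
  obtain ⟨zw, hzw, pw, hpw⟩ := exists_isPath_cons_of_distToSet_le hG hZ hw hlw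
  set S := G.twoCore ∪ {x | x ∈ (cons hu pu).support} ∪ {x | x ∈ (cons hw pw).support}
  suffices hS : G.InducesMinDegreeTwo S from
    hv (hS.subset_twoCore (.inl (.inr (cons hu pu).start_mem_support)))
  have on_path : ∀ {z} {p : G.Walk v z}, p.IsPath → z ∈ G.twoCore → {x | x ∈ p.support} ⊆ S →
      ∀ x ∈ p.support, x ∉ G.twoCore → x ≠ v →
        ∃ y y', y ≠ y' ∧ G.Adj x y ∧ G.Adj x y' ∧ y ∈ S ∧ y' ∈ S := by
    intro z p hp hz hpS x hx hxZ hxv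
    obtain ⟨y, y', hyy', hy, hy', hyp, hy'p⟩ :=
      hp.exists_adj_adj_of_mem_support hx hxv (ne_of_mem_of_not_mem hz hxZ).symm
    exact ⟨y, y', hyy', hy, hy', hpS hyp, hpS hy'p⟩
  intro x hx
  by_cases hxZ : x ∈ G.twoCore
  · obtain ⟨y, y', hyy', hy, hy', hyZ, hy'Z⟩ := inducesMinDegreeTwo_twoCore x hxZ
    exact ⟨y, y', hyy', hy, hy', .inl (.inl hyZ), .inl (.inl hy'Z)⟩
  by_cases hxv : x = v
  · subst hxv
    exact ⟨u, w, huw, hu, hw, .inl (.inr (by simp)), .inr (by simp)⟩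
  rcases hx with (hx | hx) | hx
  · exact absurd hx hxZ
  · exact on_path hpu hzu (fun y hy => .inl (.inr hy)) x hx hxZ hxv
  · exact on_path hpw hzw (fun y hy => .inr hy) x hx hxZ hxv

lemma acceptN_distToSet_twoCore (hG : G.Connected) (hZ : G.twoCore.Nonempty) (v : V) :
    AcceptN G (G.distToSet G.twoCore) v := by
  have hzero {x : V} : G.distToSet G.twoCore x = 0 ↔ x ∈ G.twoCore := distToSet_eq_zero_iff hG hZ
  by_cases hv : v ∈ G.twoCore
  · obtain ⟨u, w, huw, hu, hw, huZ, hwZ⟩ := inducesMinDegreeTwo_twoCore v hv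
    refine .inl ⟨hzero.mpr hv, ⟨u, w, huw, hu, hw, hzero.mpr huZ, hzero.mpr hwZ⟩, fun x hx => ?_⟩
    calc G.distToSet G.twoCore x ≤ G.dist x v := distToSet_le_dist hv
      _ = 1 := dist_eq_one_iff_adj.mpr hx.symm
  · obtain ⟨u, hu, hLu⟩ := exists_adj_distToSet_add_one_eq hG hZ hv
    refine .inr ⟨mt hzero.mp hv, u, hu, by omega, fun x hx hxu => ?_⟩
    have := lt_distToSet_twoCore_of_adj hG hZ hv hu hx (Ne.symm hxu) (by omega)
    have := distToSet_le_of_adj hG hZ hx.symm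
    omega

lemma inducesMinDegreeTwo_setOf_eq_zero {L : V → ℕ} (hL : ∀ v, AcceptN G L v) :
    G.InducesMinDegreeTwo {v | L v = 0} := by
  intro v hv
  rcases hL v with ⟨-, h, -⟩ | ⟨h0, -⟩
  · exact h
  · exact absurd hv h0

lemma exists_eq_zero_of_forall_acceptN [Finite V] [Nonempty V] {L : V → ℕ}
    (hL : ∀ v, AcceptN G L v) : ∃ v, L v = 0 := by
  obtain ⟨v, hv⟩ := Finite.exists_min L
  refine ⟨v, ?_⟩
  rcases hL v with ⟨h0, -⟩ | ⟨-, u, -, hu, -⟩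
  · exact h0
  · have := hv u
    omega

end SimpleGraph

open SimpleGraph in
/-- A connected graph contains a cycle iff it admits a labeling accepted everywhere
by the n-label cycle-detection verifier. -/
theorem cycle_detection_n_labels
    (V : Type*) [Fintype V] [Nonempty V] (G : SimpleGraph V) (hconn : G.Connected) :
    ¬ G.IsAcyclic ↔ ∃ L : V → ℕ, ∀ v : V, AcceptN G L v := by
  constructor
  · intro hG
    obtain ⟨a, c, hc⟩ : ∃ a, ∃ c : G.Walk a a, c.IsCycle := by simpa [IsAcyclic] using hG
    have hZ : G.twoCore.Nonempty :=
      ⟨a, hc.inducesMinDegreeTwo_support.subset_twoCore c.start_mem_support⟩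
    exact ⟨_, acceptN_distToSet_twoCore hconn hZ⟩
  · rintro ⟨L, hL⟩
    obtain ⟨v, hv⟩ := exists_eq_zero_of_forall_acceptN hL
    exact (inducesMinDegreeTwo_setOf_eq_zero hL).not_isAcyclic ⟨v, hv⟩
end

section
/- Let d ≥ 1 and λ, n be natural numbers with λ^(2d+1) + 2d < n. Then for every function f : Fin n → Fin λ there exist a natural number m ≥ 2d + 1 and a function g : ZMod m → Fin λ such that for every s : ZMod m there exists a natural number q with q + 2d < n and g(s + t) = f(q + t) for every t with 0 ≤ t ≤ 2d. -/
/-- Combining the pigeonhole lemma with the cyclic copying construction: if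
`lam^(2d+1) + 2d < n`, then for any labeling of a path on `n` vertices with `lam`
labels there is a labeled cycle of length at least `2d+1` each of whose
length-`(2d+1)` windows coincides with some window of the path labeling. -/
theorem exists_cycle_labeling_matching_path (d : ℕ) (hd : 1 ≤ d) (lam n : ℕ)
    (h : lam ^ (2 * d + 1) + 2 * d < n) (f : Fin n → Fin lam) :
    ∃ m : ℕ, 2 * d + 1 ≤ m ∧ ∃ g : ZMod m → Fin lam,
      ∀ s : ZMod m, ∃ q : ℕ, q + 2 * d < n ∧
        ∀ t : ℕ, t ≤ 2 * d → ∀ (ht : q + t < n),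
          g (s + (t : ZMod m)) = f ⟨q + t, ht⟩ := by
  -- lam must be positive
  rcases Nat.eq_zero_or_pos lam with hlam | hlam
  · subst hlam; exact (f ⟨0, by omega⟩).elim0
  have hinst : Nonempty (Fin lam) := ⟨⟨0, hlam⟩⟩
  -- extend f to ℕ
  set F : ℕ → Fin lam := fun x => if hx : x < n then f ⟨x, hx⟩ else Classical.arbitrary _
    with hF
  have hFf : ∀ x (hx : x < n), F x = f ⟨x, hx⟩ := fun x hx => dif_pos hx
  set N := lam ^ (2 * d + 1) with hN
  -- pigeonhole on windows
  have hcard : Fintype.card (Fin (2 * d + 1) → Fin lam) < Fintype.card (Fin (N + 1)) := by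
    simp [hN]
  obtain ⟨a, b, hab, hWab⟩ :=
    Fintype.exists_ne_map_eq_of_card_lt
      (fun a : Fin (N + 1) => fun t : Fin (2 * d + 1) => F (a.val + t.val)) hcard
  -- WLOG a < b
  wlog hlt : a.val < b.val generalizing a b
  · refine this b a hab.symm hWab.symm ?_
    have : a.val ≠ b.val := fun e => hab (Fin.ext e)
    omega
  set i := a.val with hi
  set j := b.val with hj'
  have hj : j ≤ N := Nat.lt_succ_iff.mp b.isLt
  have hper : ∀ t ≤ 2 * d, F (i + t) = F (j + t) := by
    intro t ht
    exact congrFun hWab ⟨t, by omega⟩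
  set m := j - i with hm
  have hm0 : 0 < m := by omega
  -- periodicity reduction lemma
  have key : ∀ x, x ≤ m - 1 + 2 * d → F (i + x) = F (i + x % m) := by
    intro x
    induction x using Nat.strong_induction_on with
    | _ x ih =>
      intro hx
      rcases Nat.lt_or_ge x m with hxm | hxm
      · rw [Nat.mod_eq_of_lt hxm]
      · have ht : x - m ≤ 2 * d := by omega
        have h1 : F (i + x) = F (i + (x - m)) := by
          have := hper (x - m) ht
          have hx' : i + x = j + (x - m) := by omega
          rw [hx', ← this]
        have h2 := ih (x - m) (by omega) (by omega)
        rw [h1, h2, Nat.mod_eq_sub_mod hxm]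
  -- the cycle length
  set M := (2 * d + 1) * m with hM
  have hM1 : 2 * d + 1 ≤ M := Nat.le_mul_of_pos_right _ hm0
  have hM0 : 0 < M := by omega
  have : NeZero M := ⟨by omega⟩
  refine ⟨M, hM1, fun s => F (i + s.val % m), fun s => ?_⟩
  set r := s.val % m with hr
  have hrm : r < m := Nat.mod_lt _ hm0
  refine ⟨i + r, by omega, fun t ht htn => ?_⟩
  have hval : (s + (t : ZMod M)).val % m = (s.val + t) % m := by
    rw [ZMod.val_add, ZMod.val_natCast, Nat.mod_mod_of_dvd _ ⟨2 * d + 1, by rw [hM]; ring⟩,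
      Nat.mod_eq_of_lt (show t < M by omega)]
  show F (i + (s + (t : ZMod M)).val % m) = _
  rw [hval]
  have h1 : (s.val + t) % m = (r + t) % m := by
    rw [hr, Nat.add_mod s.val t, Nat.add_mod (s.val % m) t, Nat.mod_mod_of_dvd s.val dvd_rfl]
  have h2 := key (r + t) (by omega)
  rw [h1, ← h2, ← Nat.add_assoc, hFf _ htn]
end
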